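/- arXiv:2105.02609 — 5 statements merged into one kernel-verified Lean document; each statement's English description precedes it below -/
import Mathlib

section
/- For any edge-labeled tree T and any area H of T (a maximal connected monochromatic subgraph), every heterogeneous search strategy for T must use at least sn(H) searchers of color c(H), where sn denotes the classical edge search number. -/
namespace GS

/-- A move of a (heterogeneous) edge-search strategy with `k` searchers. -/
inductive Move (V : Type) (k : ℕ) where
  | place (s : Fin k) (v : V)
  | remove (s : Fin k)
  | slide (s : Fin k) (u v : V)

/-- A (heterogeneous) edge-search strategy: a sequence of moves (only the first
`len` moves are relevant) together with a fixed color assignment to searchers. -/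
structure Strategy (V : Type) (k : ℕ) where
  len : ℕ
  moves : ℕ → Move V k
  colS : Fin k → ℕ

variable {V : Type} {k : ℕ}

/-- Position of each searcher after `t` moves (`none` = not on the graph). -/
def Strategy.pos (S : Strategy V k) : ℕ → Fin k → Option V
  | 0, _ => none
  | t+1, s =>
    match S.moves t with
    | Move.place s' v => if s = s' then some v else S.pos t s
    | Move.remove s' => if s = s' then none else S.pos t s
    | Move.slide s' _ v => if s = s' then some v else S.pos t s

/-- Vertices occupied by searchers after `t` moves. -/
def Strategy.occupied (S : Strategy V k) (t : ℕ) : Set V :=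
  {v | ∃ s, S.pos t s = some v}

/-- The `t`-th move slides a searcher along the edge `e`. -/
def Strategy.sweeps (S : Strategy V k) (t : ℕ) (e : Sym2 V) : Prop :=
  ∃ s u v, S.moves t = Move.slide s u v ∧ e = s(u, v)

/-- An edge `e` is exposed to recontamination: there is a searcher-free walk from an
endpoint of `e` to an endpoint of a contaminated edge. -/
def exposedEdge (G : SimpleGraph V) (occ : Set V) (C : Set (Sym2 V)) (e : Sym2 V) : Prop :=
  ∃ u w : V, u ∈ e ∧ (∃ f ∈ G.edgeSet, f ∉ C ∧ w ∈ f) ∧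
    ∃ p : G.Walk u w, ∀ x ∈ p.support, x ∉ occ

/-- The set of clean edges after `t` moves. -/
def Strategy.clean (S : Strategy V k) (G : SimpleGraph V) : ℕ → Set (Sym2 V)
  | 0 => ∅
  | t+1 =>
    {e | e ∈ (Strategy.clean S G t ∪ {e' | e' ∈ G.edgeSet ∧ S.sweeps t e'}) ∧
      ¬ exposedEdge G (S.occupied (t+1))
          (Strategy.clean S G t ∪ {e' | e' ∈ G.edgeSet ∧ S.sweeps t e'}) e}

/-- Validity of a heterogeneous strategy: a searcher may be placed only on a vertex
incident to an edge of its own color, and may slide only along an edge of its own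
color, starting from the vertex it occupies. -/
structure Strategy.Valid (S : Strategy V k) (G : SimpleGraph V) (c : Sym2 V → ℕ) : Prop where
  place_ok : ∀ t < S.len, ∀ s v, S.moves t = Move.place s v →
    S.pos t s = none ∧ ∃ w, G.Adj v w ∧ c s(v, w) = S.colS s
  slide_ok : ∀ t < S.len, ∀ s u v, S.moves t = Move.slide s u v →
    G.Adj u v ∧ c s(u, v) = S.colS s ∧ S.pos t s = some u

/-- The strategy cleans the whole graph. -/
def Strategy.CleansAll (S : Strategy V k) (G : SimpleGraph V) : Prop :=
  S.clean G S.len = G.edgeSet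

/-- Monotone strategy: no recontamination ever occurs. -/
def Strategy.IsMonotone (S : Strategy V k) (G : SimpleGraph V) : Prop :=
  ∀ t < S.len, S.clean G t ⊆ S.clean G (t+1)

/-- Number of unit recontaminations of a strategy. -/
noncomputable def Strategy.recont (S : Strategy V k) (G : SimpleGraph V) : ℕ :=
  ∑ t ∈ Finset.range S.len, ((S.clean G t) \ (S.clean G (t+1))).ncard

/-- Number of searchers of color `i`. -/
def Strategy.ncolor (S : Strategy V k) (i : ℕ) : ℕ :=
  (Finset.univ.filter fun s : Fin k => S.colS s = i).card

/-- Heterogeneous search number. -/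
noncomputable def hsn (G : SimpleGraph V) (c : Sym2 V → ℕ) : ℕ :=
  sInf {k | ∃ S : Strategy V k, S.Valid G c ∧ S.CleansAll G}

/-- Monotone heterogeneous search number. -/
noncomputable def mhsn (G : SimpleGraph V) (c : Sym2 V → ℕ) : ℕ :=
  sInf {k | ∃ S : Strategy V k, S.Valid G c ∧ S.IsMonotone G ∧ S.CleansAll G}

/-- Classical edge search number: heterogeneous search with a single color. -/
noncomputable def sn (G : SimpleGraph V) : ℕ := hsn G (fun _ => 0)

/-- A junction: a vertex incident to two edges of different colors. -/
def IsJunction (G : SimpleGraph V) (c : Sym2 V → ℕ) (v : V) : Prop :=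
  ∃ e ∈ G.edgeSet, ∃ f ∈ G.edgeSet, v ∈ e ∧ v ∈ f ∧ c e ≠ c f

/-- Any two distinct edges of `H` are joined by a junction-free path within `H`. -/
def AreaProp (G : SimpleGraph V) (c : Sym2 V → ℕ) (H : Set (Sym2 V)) : Prop :=
  H ⊆ G.edgeSet ∧ ∀ e ∈ H, ∀ f ∈ H, e ≠ f → ∃ u w : V, u ∈ e ∧ w ∈ f ∧
    ∃ p : (SimpleGraph.fromEdgeSet H).Walk u w, ∀ x ∈ p.support, ¬ IsJunction G c x

/-- An area: a maximal nonempty set of edges with the junction-free connectivity property. -/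
def IsArea (G : SimpleGraph V) (c : Sym2 V → ℕ) (H : Set (Sym2 V)) : Prop :=
  H.Nonempty ∧ AreaProp G c H ∧ ∀ H', AreaProp G c H' → H ⊆ H' → H' = H

/-- Vertices spanned by a set of edges. -/
def vertsOf (H : Set (Sym2 V)) : Set V := {v | ∃ e ∈ H, v ∈ e}

/-- The lower bound `lb`: sum over colors of the maximal classical search number
of an area of that color. -/
noncomputable def lb (G : SimpleGraph V) (c : Sym2 V → ℕ) (K : ℕ) : ℕ :=
  ∑ i ∈ Finset.range K,
    sSup {q | ∃ H : Set (Sym2 V), IsArea G c H ∧ (∀ e ∈ H, c e = i) ∧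
      q = sn (SimpleGraph.fromEdgeSet H)}

/-- A set of edges is edge-connected. -/
def EdgeConnectedSet (H : Set (Sym2 V)) : Prop :=
  ∀ e ∈ H, ∀ f ∈ H, ∃ u w : V, u ∈ e ∧ w ∈ f ∧
    Nonempty ((SimpleGraph.fromEdgeSet H).Walk u w)

/-- Connected strategy: the set of clean edges is connected after every move. -/
def Strategy.IsConnectedStrat (S : Strategy V k) (G : SimpleGraph V) : Prop :=
  ∀ t ≤ S.len, EdgeConnectedSet (S.clean G t)

/-- Connected heterogeneous search number. -/
noncomputable def hcsn (G : SimpleGraph V) (c : Sym2 V → ℕ) : ℕ :=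
  sInf {k | ∃ S : Strategy V k, S.Valid G c ∧ S.IsConnectedStrat G ∧ S.CleansAll G}

/-- First move after which the edge `e` is clean. -/
noncomputable def firstClean (S : Strategy V k) (G : SimpleGraph V) (e : Sym2 V) : ℕ :=
  sInf {t | e ∈ S.clean G t}

/-- All searchers are on vertices of `A` after move `t`. -/
def allOn (S : Strategy V k) (t : ℕ) (A : Set V) : Prop :=
  ∀ s : Fin k, ∃ v ∈ A, S.pos t s = some v

/-- First move with all searchers on `A`. -/
noncomputable def tfirst (S : Strategy V k) (A : Set V) : ℕ :=
  sInf {t | t ≤ S.len ∧ allOn S t A}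

/-- Last move with all searchers on `A`. -/
noncomputable def tlast (S : Strategy V k) (A : Set V) : ℕ :=
  sSup {t | t ≤ S.len ∧ allOn S t A}


/-! ### Auxiliary machinery for the simulation argument -/

section AuxLemmas

open Classical SimpleGraph

lemma pos_succ_place (S : Strategy V k) {t : ℕ} {s₁ : Fin k} {v : V}
    (hm : S.moves t = .place s₁ v) (s : Fin k) :
    S.pos (t+1) s = if s = s₁ then some v else S.pos t s := by
  simp [Strategy.pos, hm]

lemma pos_succ_remove (S : Strategy V k) {t : ℕ} {s₁ : Fin k}
    (hm : S.moves t = .remove s₁) (s : Fin k) :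
    S.pos (t+1) s = if s = s₁ then none else S.pos t s := by
  simp [Strategy.pos, hm]

lemma pos_succ_slide (S : Strategy V k) {t : ℕ} {s₁ : Fin k} {u v : V}
    (hm : S.moves t = .slide s₁ u v) (s : Fin k) :
    S.pos (t+1) s = if s = s₁ then some v else S.pos t s := by
  simp [Strategy.pos, hm]

lemma mem_clean_succ {S : Strategy V k} {G : SimpleGraph V} {t : ℕ} {e : Sym2 V} :
    e ∈ S.clean G (t+1) ↔ (e ∈ S.clean G t ∪ {e' | e' ∈ G.edgeSet ∧ S.sweeps t e'}) ∧
      ¬ exposedEdge G (S.occupied (t+1))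
        (S.clean G t ∪ {e' | e' ∈ G.edgeSet ∧ S.sweeps t e'}) e := Iff.rfl

lemma clean_subset_edgeSet (S : Strategy V k) (G : SimpleGraph V) :
    ∀ t, S.clean G t ⊆ G.edgeSet := by
  intro t
  induction t with
  | zero => simp [Strategy.clean]
  | succ t ih =>
    intro e he
    rcases (mem_clean_succ.1 he).1 with h | h
    · exact ih h
    · exact h.1

lemma clean_swept (S : Strategy V k) (G : SimpleGraph V) :
    ∀ t, ∀ e ∈ S.clean G t, ∃ t' < t, S.sweeps t' e := by
  intro t
  induction t with
  | zero => simp [Strategy.clean]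
  | succ t ih =>
    intro e he
    rcases (mem_clean_succ.1 he).1 with h | h
    · obtain ⟨t', ht', hs⟩ := ih e h
      exact ⟨t', by omega, hs⟩
    · exact ⟨t, by omega, h.2⟩

lemma mem_vertsOf {H : Set (Sym2 V)} {e : Sym2 V} {x : V} (he : e ∈ H) (hx : x ∈ e) :
    x ∈ vertsOf H := ⟨e, he, hx⟩

lemma adj_of_mem {G : SimpleGraph V} {u v : V} (h : s(u, v) ∈ G.edgeSet) : G.Adj u v := by
  rwa [SimpleGraph.mem_edgeSet] at h

lemma mem_of_adj {G : SimpleGraph V} {u v : V} (h : G.Adj u v) : s(u, v) ∈ G.edgeSet := by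
  rwa [SimpleGraph.mem_edgeSet]

lemma fromEdgeSet_le_of {G : SimpleGraph V} {H : Set (Sym2 V)} (h : H ⊆ G.edgeSet) :
    SimpleGraph.fromEdgeSet H ≤ G := by
  intro a b hab
  rw [SimpleGraph.fromEdgeSet_adj] at hab
  exact adj_of_mem (h hab.1)

lemma walk_support_verts {H : Set (Sym2 V)} {u w : V}
    (p : (SimpleGraph.fromEdgeSet H).Walk u w) (hu : u ∈ vertsOf H) :
    ∀ x ∈ p.support, x ∈ vertsOf H := by
  induction p with
  | nil => simpa using hu
  | @cons a b c h q ih =>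
    have hab : s(a, b) ∈ H := ((SimpleGraph.fromEdgeSet_adj _).1 h).1
    intro x hx
    rw [SimpleGraph.Walk.support_cons] at hx
    rcases List.mem_cons.1 hx with rfl | hx
    · exact hu
    · exact ih (mem_vertsOf hab (by simp)) x hx

lemma walk_edges_mem {H : Set (Sym2 V)} {u w : V}
    (p : (SimpleGraph.fromEdgeSet H).Walk u w) :
    ∀ e ∈ p.edges, e ∈ H := by
  intro e he
  have := p.edges_subset_edgeSet he
  rw [SimpleGraph.edgeSet_fromEdgeSet] at this
  exact this.1

/-- Walks inside `fromEdgeSet H` avoid any edge `g ∉ H`, giving reachability in `G`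
minus `g`. -/
lemma reach_del_of_walkH {G : SimpleGraph V} {H : Set (Sym2 V)} (hHe : H ⊆ G.edgeSet)
    {g : Sym2 V} (hg : g ∉ H) {a b : V} (p : (SimpleGraph.fromEdgeSet H).Walk a b) :
    (G \ SimpleGraph.fromEdgeSet {g}).Reachable a b := by
  refine SimpleGraph.Reachable.mono ?_ ⟨p⟩
  intro x y hxy
  rw [SimpleGraph.fromEdgeSet_adj] at hxy
  rw [SimpleGraph.sdiff_adj]
  refine ⟨adj_of_mem (hHe hxy.1), ?_⟩
  intro h'
  rw [SimpleGraph.fromEdgeSet_adj] at h'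
  rcases h' with ⟨h', -⟩
  rw [Set.mem_singleton_iff] at h'
  exact hg (h' ▸ hxy.1)

lemma adj_del {G : SimpleGraph V} {g : Sym2 V} {u v : V} (h : G.Adj u v)
    (hne : s(u, v) ≠ g) : (G \ SimpleGraph.fromEdgeSet {g}).Adj u v := by
  rw [SimpleGraph.sdiff_adj]
  refine ⟨h, ?_⟩
  intro h'
  rw [SimpleGraph.fromEdgeSet_adj] at h'
  exact hne h'.1

lemma tree_bridge {G : SimpleGraph V} (hT : G.IsTree) {x y : V} (h : G.Adj x y) :
    ¬ (G \ SimpleGraph.fromEdgeSet {s(x, y)}).Reachable x y := by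
  have := (SimpleGraph.isAcyclic_iff_forall_edge_isBridge.1 hT.IsAcyclic)
    (mem_of_adj h)
  exact SimpleGraph.isBridge_iff.1 this

/-- In a tree, an edge of `G` outside `H` cannot link two vertices spanned by an
area-like set `H`. -/
lemma no_outside_edge {G : SimpleGraph V} (hT : G.IsTree) {c : Sym2 V → ℕ}
    {H : Set (Sym2 V)} (hH : AreaProp G c H) {u v : V} (huv : G.Adj u v)
    (hg : s(u, v) ∉ H) (hu : u ∈ vertsOf H) (hv : v ∈ vertsOf H) : False := by
  obtain ⟨eu, heu, hue⟩ := hu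
  obtain ⟨ev, hev, hve⟩ := hv
  obtain ⟨a, rfl⟩ := Sym2.mem_iff_exists.1 hue
  obtain ⟨b, rfl⟩ := Sym2.mem_iff_exists.1 hve
  by_cases heq : (s(u, a) : Sym2 V) = s(v, b)
  · have hvm : v ∈ (s(u, a) : Sym2 V) := by rw [heq]; simp
    rcases Sym2.mem_iff.1 hvm with rfl | rfl
    · exact huv.ne rfl
    · first
      | exact hg heu
      | exact hg (by rw [Sym2.eq_swap]; exact heu)
  · obtain ⟨u', w', hu', hw', p, -⟩ := hH.2 _ heu _ hev heq
    apply tree_bridge hT huv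
    have h1 : (G \ SimpleGraph.fromEdgeSet {s(u, v)}).Reachable u u' := by
      rcases Sym2.mem_iff.1 hu' with rfl | rfl
      · exact SimpleGraph.Reachable.refl _
      · refine SimpleGraph.Adj.reachable (adj_del ?_ ?_)
        · exact adj_of_mem (hH.1 heu)
        · intro hcon; exact hg (hcon ▸ heu)
    have h2 : (G \ SimpleGraph.fromEdgeSet {s(u, v)}).Reachable u' w' :=
      reach_del_of_walkH hH.1 hg p
    have h3 : (G \ SimpleGraph.fromEdgeSet {s(u, v)}).Reachable w' v := by
      rcases Sym2.mem_iff.1 hw' with rfl | rfl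
      · exact SimpleGraph.Reachable.refl _
      · refine SimpleGraph.Reachable.symm (SimpleGraph.Adj.reachable (adj_del ?_ ?_))
        · exact adj_of_mem (hH.1 hev)
        · intro hcon; exact hg (hcon ▸ hev)
    exact (h1.trans h2).trans h3

/-- In a tree, a junction is incident to at most one edge of an area-like set `H`. -/
lemma junction_unique_edge {G : SimpleGraph V} (hT : G.IsTree) {c : Sym2 V → ℕ}
    {H : Set (Sym2 V)} (hH : AreaProp G c H) {x : V} (hx : IsJunction G c x) :
    ∀ e ∈ H, ∀ f ∈ H, x ∈ e → x ∈ f → e = f := by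
  intro e he f hf hxe hxf
  by_contra hne
  obtain ⟨a, rfl⟩ := Sym2.mem_iff_exists.1 hxe
  obtain ⟨b, rfl⟩ := Sym2.mem_iff_exists.1 hxf
  obtain ⟨u', w', hu', hw', p, hp⟩ := hH.2 _ he _ hf hne
  have hxa : G.Adj x a := adj_of_mem (hH.1 he)
  have hxb : G.Adj x b := adj_of_mem (hH.1 hf)
  have hu'a : u' = a := by
    rcases Sym2.mem_iff.1 hu' with rfl | rfl
    · exact absurd hx (hp _ p.start_mem_support)
    · rfl
  have hw'b : w' = b := by
    rcases Sym2.mem_iff.1 hw' with rfl | rfl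
    · exact absurd hx (hp _ p.end_mem_support)
    · rfl
  subst hu'a; subst hw'b
  -- `s(x,u')` is not an edge of `p`, else `x ∈ p.support`
  have hgp : (s(x, u') : Sym2 V) ∉ p.edges := by
    intro hmem
    exact hp _ (p.fst_mem_support_of_mem_edges hmem) hx
  apply tree_bridge hT hxa
  have h2 : (G \ SimpleGraph.fromEdgeSet {s(x, u')}).Reachable u' w' := by
    refine ⟨p.transfer _ ?_⟩
    intro e' he'
    have h1 : e' ∈ H := walk_edges_mem p e' he'
    rw [SimpleGraph.edgeSet_sdiff, SimpleGraph.edgeSet_fromEdgeSet]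
    refine ⟨hH.1 h1, ?_⟩
    rintro ⟨hc, -⟩
    rw [Set.mem_singleton_iff] at hc
    exact hgp (hc ▸ he')
  have h3 : (G \ SimpleGraph.fromEdgeSet {s(x, u')}).Reachable w' x := by
    refine SimpleGraph.Reachable.symm (SimpleGraph.Adj.reachable (adj_del hxb ?_))
    intro hcon
    rcases Sym2.eq_iff.1 hcon with ⟨-, rfl⟩ | ⟨rfl, -⟩
    · exact hne rfl
    · exact hxa.ne rfl
  exact (h2.trans h3).symm
/-- Every placed searcher stands on a vertex incident to an edge of its own color. -/
lemma pos_color {G : SimpleGraph V} {c : Sym2 V → ℕ} {S : Strategy V k}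
    (hv : S.Valid G c) :
    ∀ t, t ≤ S.len → ∀ s x, S.pos t s = some x →
      ∃ e ∈ G.edgeSet, x ∈ e ∧ c e = S.colS s := by
  intro t
  induction t with
  | zero => intro _ s x hx; simp [Strategy.pos] at hx
  | succ t ih =>
    intro ht s x hx
    have htl : t < S.len := ht
    have ht' : t ≤ S.len := le_of_lt htl
    cases hm : S.moves t with
    | place s₁ v =>
      rw [pos_succ_place S hm] at hx
      by_cases hs : s = s₁
      · rw [if_pos hs] at hx
        obtain ⟨-, w, hadj, hcw⟩ := hv.place_ok t htl s₁ v hm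
        refine ⟨s(v, w), mem_of_adj hadj, ?_, by rw [hcw, hs]⟩
        have : v = x := by injection hx
        subst this; simp
      · rw [if_neg hs] at hx; exact ih ht' s x hx
    | remove s₁ =>
      rw [pos_succ_remove S hm] at hx
      by_cases hs : s = s₁
      · rw [if_pos hs] at hx; simp at hx
      · rw [if_neg hs] at hx; exact ih ht' s x hx
    | slide s₁ u v =>
      rw [pos_succ_slide S hm] at hx
      by_cases hs : s = s₁
      · rw [if_pos hs] at hx
        obtain ⟨hadj, hcw, -⟩ := hv.slide_ok t htl s₁ u v hm
        refine ⟨s(u, v), mem_of_adj hadj, ?_, by rw [hcw, hs]⟩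
        have : v = x := by injection hx
        subst this; simp
      · rw [if_neg hs] at hx; exact ih ht' s x hx

/-! ### The simulated strategy on an area -/

/-- Whether step `t` of `S` is simulated on the area `H` of color `i`. -/
def act (S : Strategy V k) (H : Set (Sym2 V)) (i : ℕ) (t : ℕ) : Prop :=
  match S.moves t with
  | .place s v => S.colS s = i ∧ v ∈ vertsOf H
  | .remove s => S.colS s = i
  | .slide s _ _ => S.colS s = i

/-- The number of simulated steps among the first `t` steps. -/
noncomputable def fc (S : Strategy V k) (H : Set (Sym2 V)) (i : ℕ) (t : ℕ) : ℕ :=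
  ((Finset.range t).filter (fun t' => act S H i t')).card

lemma fc_zero (S : Strategy V k) (H : Set (Sym2 V)) (i : ℕ) : fc S H i 0 = 0 := by
  simp [fc]

lemma fc_succ (S : Strategy V k) (H : Set (Sym2 V)) (i : ℕ) (t : ℕ) :
    fc S H i (t+1) = if act S H i t then fc S H i t + 1 else fc S H i t := by
  classical
  unfold fc
  rw [Finset.range_add_one, Finset.filter_insert]
  split
  · rw [Finset.card_insert_of_notMem (by simp)]
  · rfl

lemma fc_mono (S : Strategy V k) (H : Set (Sym2 V)) (i : ℕ) {t t' : ℕ} (h : t ≤ t') :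
    fc S H i t ≤ fc S H i t' :=
  Finset.card_le_card (Finset.filter_subset_filter _ (Finset.range_subset_range.2 h))

lemma fc_act_inj (S : Strategy V k) (H : Set (Sym2 V)) (i : ℕ) {t t' : ℕ}
    (ht : act S H i t) (ht' : act S H i t') (h : fc S H i t = fc S H i t') : t = t' := by
  rcases lt_trichotomy t t' with hlt | heq | hlt
  · exfalso
    have h1 : fc S H i t + 1 = fc S H i (t+1) := by rw [fc_succ, if_pos ht]
    have h2 : fc S H i (t+1) ≤ fc S H i t' := fc_mono S H i hlt
    omega
  · exact heq
  · exfalso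
    have h1 : fc S H i t' + 1 = fc S H i (t'+1) := by rw [fc_succ, if_pos ht']
    have h2 : fc S H i (t'+1) ≤ fc S H i t := fc_mono S H i hlt
    omega

/-- The `j`-th simulated step. -/
noncomputable def invf (S : Strategy V k) (H : Set (Sym2 V)) (i : ℕ) (j : ℕ) : ℕ :=
  sInf {t | act S H i t ∧ fc S H i t = j}

lemma invf_fc (S : Strategy V k) (H : Set (Sym2 V)) (i : ℕ) {t : ℕ} (ht : act S H i t) :
    invf S H i (fc S H i t) = t := by
  have : {t' | act S H i t' ∧ fc S H i t' = fc S H i t} = {t} := by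
    ext t'
    simp only [Set.mem_setOf_eq, Set.mem_singleton_iff]
    constructor
    · rintro ⟨h1, h2⟩; exact fc_act_inj S H i h1 ht h2
    · rintro rfl; exact ⟨ht, rfl⟩
  rw [invf, this, csInf_singleton]

lemma fc_surj (S : Strategy V k) (H : Set (Sym2 V)) (i : ℕ) :
    ∀ T j, j < fc S H i T → ∃ t < T, act S H i t ∧ fc S H i t = j := by
  intro T
  induction T with
  | zero => intro j hj; rw [fc_zero] at hj; omega
  | succ T ih =>
    intro j hj
    rw [fc_succ] at hj
    split at hj
    · rcases Nat.lt_succ_iff_lt_or_eq.1 hj with h | h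
      · obtain ⟨t, ht, h1, h2⟩ := ih j h
        exact ⟨t, by omega, h1, h2⟩
      · exact ⟨T, by omega, by assumption, h.symm⟩
    · obtain ⟨t, ht, h1, h2⟩ := ih j hj
      exact ⟨t, by omega, h1, h2⟩

open Classical in
/-- Translation of a single move. -/
noncomputable def trM (S : Strategy V k) (H : Set (Sym2 V)) (i : ℕ) {n : ℕ}
    (φ : {s : Fin k // S.colS s = i} ≃ Fin n) (d : Fin n) : Move V k → Move V n
  | .place s v => if h : S.colS s = i then .place (φ ⟨s, h⟩) v else .remove d
  | .remove s => if h : S.colS s = i then .remove (φ ⟨s, h⟩) else .remove d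
  | .slide s u v =>
      if h : S.colS s = i then
        if s(u, v) ∈ H then .slide (φ ⟨s, h⟩) u v
        else if v ∈ vertsOf H then .place (φ ⟨s, h⟩) v
        else .remove (φ ⟨s, h⟩)
      else .remove d

/-- The simulated strategy on the area `H`. -/
noncomputable def sim (S : Strategy V k) (H : Set (Sym2 V)) (i : ℕ) {n : ℕ}
    (φ : {s : Fin k // S.colS s = i} ≃ Fin n) (d : Fin n) : Strategy V n where
  len := fc S H i S.len
  moves := fun j => trM S H i φ d (S.moves (invf S H i j))
  colS := fun _ => 0

lemma sim_moves (S : Strategy V k) (H : Set (Sym2 V)) (i : ℕ) {n : ℕ}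
    (φ : {s : Fin k // S.colS s = i} ≃ Fin n) (d : Fin n) {t : ℕ} (ht : act S H i t) :
    (sim S H i φ d).moves (fc S H i t) = trM S H i φ d (S.moves t) := by
  simp only [sim]
  rw [invf_fc S H i ht]

open Classical in
/-- Restriction of a position to the vertices of `H`. -/
noncomputable def omap (H : Set (Sym2 V)) : Option V → Option V
  | some x => if x ∈ vertsOf H then some x else none
  | none => none

end AuxLemmas

/-- For any edge-labeled tree `T` and any area `H` of `T`
(of color `i`), every heterogeneous search strategy for `T` uses at least
`sn(H)` searchers of color `i`, where `sn` is the classical edge search number. -/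
theorem area_color_lower_bound {V : Type} [Fintype V] [DecidableEq V]
    (G : SimpleGraph V) (hT : G.IsTree) (c : Sym2 V → ℕ)
    (H : Set (Sym2 V)) (hH : IsArea G c H) (i : ℕ) (hcol : ∀ e ∈ H, c e = i)
    {k : ℕ} (S : Strategy V k) (hv : S.Valid G c) (hc : S.CleansAll G) :
    sn (SimpleGraph.fromEdgeSet H) ≤ S.ncolor i := by
  classical
  obtain ⟨hHne, hAP, -⟩ := hH
  have hHe : H ⊆ G.edgeSet := hAP.1
  set G' := SimpleGraph.fromEdgeSet H with hG'
  have hG'edge : G'.edgeSet = H := by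
    rw [hG', SimpleGraph.edgeSet_fromEdgeSet]
    ext e; constructor
    · exact fun h => h.1
    · intro h; exact ⟨h, G.not_isDiag_of_mem_edgeSet (hHe h)⟩
  -- there is at least one searcher of color `i`
  obtain ⟨e₀, he₀⟩ := hHne
  have he₀c : e₀ ∈ S.clean G S.len := by
    rw [hc]; exact hHe he₀
  obtain ⟨t₀, ht₀, s₀, u₀, v₀, hm₀, he₀e⟩ := clean_swept S G S.len e₀ he₀c
  have hs₀ : S.colS s₀ = i := by
    obtain ⟨-, hcc, -⟩ := hv.slide_ok t₀ ht₀ s₀ u₀ v₀ hm₀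
    rw [← hcc, ← he₀e, hcol e₀ he₀]
  have hn : 0 < S.ncolor i := by
    rw [Strategy.ncolor]
    exact Finset.card_pos.2 ⟨s₀, Finset.mem_filter.2 ⟨Finset.mem_univ _, hs₀⟩⟩
  set n := S.ncolor i with hndef
  have hcard : Fintype.card {s : Fin k // S.colS s = i} = n := by
    rw [Fintype.card_subtype]; rfl
  set φ : {s : Fin k // S.colS s = i} ≃ Fin n := Fintype.equivFinOfCardEq hcard with hφ
  set d : Fin n := ⟨0, hn⟩ with hd
  set S' := sim S H i φ d with hS'
  set F := fc S H i with hF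
  have heqv : ∀ (s s₁ : Fin k) (hs : S.colS s = i) (h₁ : S.colS s₁ = i),
      (φ ⟨s, hs⟩ = φ ⟨s₁, h₁⟩ ↔ s = s₁) := by
    intro s s₁ hs h₁
    rw [Equiv.apply_eq_iff_eq]
    exact Subtype.mk_eq_mk
  -- the position invariant
  have P1 : ∀ t, t ≤ S.len → ∀ (s : Fin k) (hs : S.colS s = i),
      S'.pos (F t) (φ ⟨s, hs⟩) = omap H (S.pos t s) := by
    intro t
    induction t with
    | zero =>
      intro _ s hs
      rw [hF, fc_zero]
      simp [Strategy.pos, omap]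
    | succ t ih =>
      intro ht s hs
      have htl : t < S.len := ht
      have ht' : t ≤ S.len := le_of_lt htl
      cases hm : S.moves t with
      | place s₁ v =>
        rw [pos_succ_place S hm]
        by_cases h₁ : S.colS s₁ = i
        · by_cases hvH : v ∈ vertsOf H
          · -- active step
            have hact : act S H i t := by unfold act; rw [hm]; exact ⟨h₁, hvH⟩
            have hFs : F (t+1) = F t + 1 := by rw [hF, fc_succ, if_pos hact]
            have hmv : S'.moves (F t) = Move.place (φ ⟨s₁, h₁⟩) v := by
              rw [hS', hF, sim_moves S H i φ d hact, hm]
              simp only [trM]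
              rw [dif_pos h₁]
            rw [hFs, pos_succ_place S' hmv]
            by_cases hss : s = s₁
            · rw [if_pos ((heqv s s₁ hs h₁).2 hss), if_pos hss]
              simp [omap, hvH]
            · rw [if_neg (fun hcc => hss ((heqv s s₁ hs h₁).1 hcc)), if_neg hss]
              exact ih ht' s hs
          · -- inactive step
            have hact : ¬ act S H i t := by
              unfold act; rw [hm]; exact fun hcc => hvH hcc.2
            have hFs : F (t+1) = F t := by rw [hF, fc_succ, if_neg hact]
            rw [hFs]
            by_cases hss : s = s₁
            · rw [if_pos hss, ih ht' s hs]
              have hnone : S.pos t s = none := by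
                rw [hss]; exact (hv.place_ok t htl s₁ v hm).1
              rw [hnone]
              simp [omap, hvH]
            · rw [if_neg hss]; exact ih ht' s hs
        · -- other color: inactive, and s ≠ s₁
          have hact : ¬ act S H i t := by
            unfold act; rw [hm]; exact fun hcc => h₁ hcc.1
          have hFs : F (t+1) = F t := by rw [hF, fc_succ, if_neg hact]
          have hss : s ≠ s₁ := fun hcc => h₁ (hcc ▸ hs)
          rw [hFs, if_neg hss]
          exact ih ht' s hs
      | remove s₁ =>
        rw [pos_succ_remove S hm]
        by_cases h₁ : S.colS s₁ = i
        · have hact : act S H i t := by unfold act; rw [hm]; exact h₁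
          have hFs : F (t+1) = F t + 1 := by rw [hF, fc_succ, if_pos hact]
          have hmv : S'.moves (F t) = Move.remove (φ ⟨s₁, h₁⟩) := by
            rw [hS', hF, sim_moves S H i φ d hact, hm]
            simp [trM, h₁]
          rw [hFs, pos_succ_remove S' hmv]
          by_cases hss : s = s₁
          · rw [if_pos ((heqv s s₁ hs h₁).2 hss), if_pos hss]
            rfl
          · rw [if_neg (fun hcc => hss ((heqv s s₁ hs h₁).1 hcc)), if_neg hss]
            exact ih ht' s hs
        · have hact : ¬ act S H i t := by
            unfold act; rw [hm]; exact h₁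
          have hFs : F (t+1) = F t := by rw [hF, fc_succ, if_neg hact]
          have hss : s ≠ s₁ := fun hcc => h₁ (hcc ▸ hs)
          rw [hFs, if_neg hss]
          exact ih ht' s hs
      | slide s₁ u v =>
        rw [pos_succ_slide S hm]
        obtain ⟨hadj₁, hcuv, hpos₁⟩ := hv.slide_ok t htl s₁ u v hm
        by_cases h₁ : S.colS s₁ = i
        · have hact : act S H i t := by unfold act; rw [hm]; exact h₁
          have hFs : F (t+1) = F t + 1 := by rw [hF, fc_succ, if_pos hact]
          by_cases hsv : (s(u, v) : Sym2 V) ∈ H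
          · have hmv : S'.moves (F t) = Move.slide (φ ⟨s₁, h₁⟩) u v := by
              rw [hS', hF, sim_moves S H i φ d hact, hm]
              simp [trM, h₁, hsv]
            rw [hFs, pos_succ_slide S' hmv]
            by_cases hss : s = s₁
            · rw [if_pos ((heqv s s₁ hs h₁).2 hss), if_pos hss]
              simp [omap, mem_vertsOf hsv (Sym2.mem_mk_right u v)]
            · rw [if_neg (fun hcc => hss ((heqv s s₁ hs h₁).1 hcc)), if_neg hss]
              exact ih ht' s hs
          · by_cases hvH : v ∈ vertsOf H
            · have hmv : S'.moves (F t) = Move.place (φ ⟨s₁, h₁⟩) v := by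
                rw [hS', hF, sim_moves S H i φ d hact, hm]
                simp [trM, h₁, hsv, hvH]
              rw [hFs, pos_succ_place S' hmv]
              by_cases hss : s = s₁
              · rw [if_pos ((heqv s s₁ hs h₁).2 hss), if_pos hss]
                simp [omap, hvH]
              · rw [if_neg (fun hcc => hss ((heqv s s₁ hs h₁).1 hcc)), if_neg hss]
                exact ih ht' s hs
            · have hmv : S'.moves (F t) = Move.remove (φ ⟨s₁, h₁⟩) := by
                rw [hS', hF, sim_moves S H i φ d hact, hm]
                simp [trM, h₁, hsv, hvH]
              rw [hFs, pos_succ_remove S' hmv]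
              by_cases hss : s = s₁
              · rw [if_pos ((heqv s s₁ hs h₁).2 hss), if_pos hss]
                simp [omap, hvH]
              · rw [if_neg (fun hcc => hss ((heqv s s₁ hs h₁).1 hcc)), if_neg hss]
                exact ih ht' s hs
        · have hact : ¬ act S H i t := by
            unfold act; rw [hm]; exact h₁
          have hFs : F (t+1) = F t := by rw [hF, fc_succ, if_neg hact]
          have hss : s ≠ s₁ := fun hcc => h₁ (hcc ▸ hs)
          rw [hFs, if_neg hss]
          exact ih ht' s hs
  -- occupied characterization
  have hocc : ∀ (j : ℕ) (x : V), x ∈ S'.occupied j ↔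
      ∃ (s : Fin k) (hs : S.colS s = i), S'.pos j (φ ⟨s, hs⟩) = some x := by
    intro j x
    constructor
    · rintro ⟨σ, hσ⟩
      obtain ⟨sp, rfl⟩ := φ.surjective σ
      exact ⟨sp.1, sp.2, hσ⟩
    · rintro ⟨s, hs, h⟩; exact ⟨_, h⟩
  -- vertices of `H` guarded in `S` but not in `S'` are junctions
  have hguard : ∀ t, t ≤ S.len → ∀ x, x ∈ vertsOf H → x ∈ S.occupied t →
      x ∉ S'.occupied (F t) → IsJunction G c x := by
    intro t ht x hxH hxS hx'
    obtain ⟨s, hps⟩ := hxS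
    by_cases hs : S.colS s = i
    · exfalso
      apply hx'
      refine (hocc (F t) x).2 ⟨s, hs, ?_⟩
      rw [P1 t ht s hs, hps]
      simp [omap, hxH]
    · obtain ⟨e₂, he₂, hxe₂, hce₂⟩ := pos_color hv t ht s x hps
      obtain ⟨ex, hex, hxex⟩ := hxH
      refine ⟨ex, hHe hex, e₂, he₂, hxex, hxe₂, ?_⟩
      rw [hcol ex hex, hce₂]
      exact fun hcc => hs hcc.symm
  -- validity of the simulated strategy
  have hval' : S'.Valid G' (fun _ => 0) := by
    constructor
    · intro j hj s' v hm'
      have hj' : j < fc S H i S.len := by simpa [hS', sim] using hj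
      obtain ⟨t, htT, hat, hft⟩ := fc_surj S H i S.len j hj'
      have htle : t ≤ S.len := le_of_lt htT
      have hmv : S'.moves j = trM S H i φ d (S.moves t) := by
        rw [← hft, hS']
        exact sim_moves S H i φ d hat
      rw [hmv] at hm'
      have hnbr : ∀ v₁ : V, v₁ ∈ vertsOf H → ∃ w, G'.Adj v₁ w ∧ (fun _ => (0:ℕ)) s(v₁, w) = S'.colS s' := by
        intro v₁ hvH
        obtain ⟨e₁, he₁, hve₁⟩ := hvH
        obtain ⟨w, rfl⟩ := Sym2.mem_iff_exists.1 hve₁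
        refine ⟨w, ?_, rfl⟩
        rw [hG', SimpleGraph.fromEdgeSet_adj]
        refine ⟨he₁, ?_⟩
        intro hcc
        exact G.not_isDiag_of_mem_edgeSet (hHe he₁) (Sym2.mk_isDiag_iff.2 hcc)
      cases hmt : S.moves t with
      | place s₁ v₁ =>
        rw [hmt] at hm'
        by_cases h₁ : S.colS s₁ = i
        · simp only [trM, dif_pos h₁, Move.place.injEq] at hm'
          obtain ⟨hseq, hveq⟩ := hm'
          subst hveq
          have hvH : v₁ ∈ vertsOf H := by
            unfold act at hat; rw [hmt] at hat; exact hat.2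
          constructor
          · rw [← hseq, ← hft, P1 t htle s₁ h₁, (hv.place_ok t htT s₁ v₁ hmt).1]
            rfl
          · exact hnbr v₁ hvH
        · simp only [trM, dif_neg h₁] at hm'
          cases hm'
      | remove s₁ =>
        rw [hmt] at hm'
        by_cases h₁ : S.colS s₁ = i
        · simp only [trM, dif_pos h₁] at hm'; cases hm'
        · simp only [trM, dif_neg h₁] at hm'; cases hm'
      | slide s₁ u₁ v₁ =>
        rw [hmt] at hm'
        by_cases h₁ : S.colS s₁ = i
        · by_cases hsv : (s(u₁, v₁) : Sym2 V) ∈ H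
          · simp only [trM, dif_pos h₁, if_pos hsv] at hm'; cases hm'
          · by_cases hvH : v₁ ∈ vertsOf H
            · simp only [trM, dif_pos h₁, if_neg hsv, if_pos hvH, Move.place.injEq] at hm'
              obtain ⟨hseq, hveq⟩ := hm'
              subst hveq
              obtain ⟨hadj₁, hc₁, hpos₁⟩ := hv.slide_ok t htT s₁ u₁ v₁ hmt
              have hu₁ : u₁ ∉ vertsOf H := fun hu => no_outside_edge hT hAP hadj₁ hsv hu hvH
              constructor
              · rw [← hseq, ← hft, P1 t htle s₁ h₁, hpos₁]
                simp [omap, hu₁]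
              · exact hnbr v₁ hvH
            · simp only [trM, dif_pos h₁, if_neg hsv, if_neg hvH] at hm'; cases hm'
        · simp only [trM, dif_neg h₁] at hm'; cases hm'
    · intro j hj s' u v hm'
      have hj' : j < fc S H i S.len := by simpa [hS', sim] using hj
      obtain ⟨t, htT, hat, hft⟩ := fc_surj S H i S.len j hj'
      have htle : t ≤ S.len := le_of_lt htT
      have hmv : S'.moves j = trM S H i φ d (S.moves t) := by
        rw [← hft, hS']
        exact sim_moves S H i φ d hat
      rw [hmv] at hm'
      cases hmt : S.moves t with
      | place s₁ v₁ =>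
        rw [hmt] at hm'
        by_cases h₁ : S.colS s₁ = i
        · simp only [trM, dif_pos h₁] at hm'; cases hm'
        · simp only [trM, dif_neg h₁] at hm'; cases hm'
      | remove s₁ =>
        rw [hmt] at hm'
        by_cases h₁ : S.colS s₁ = i
        · simp only [trM, dif_pos h₁] at hm'; cases hm'
        · simp only [trM, dif_neg h₁] at hm'; cases hm'
      | slide s₁ u₁ v₁ =>
        rw [hmt] at hm'
        by_cases h₁ : S.colS s₁ = i
        · by_cases hsv : (s(u₁, v₁) : Sym2 V) ∈ H
          · simp only [trM, dif_pos h₁, if_pos hsv, Move.slide.injEq] at hm'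
            obtain ⟨hseq, hueq, hveq⟩ := hm'
            subst hueq; subst hveq
            obtain ⟨hadj₁, hc₁, hpos₁⟩ := hv.slide_ok t htT s₁ u₁ v₁ hmt
            refine ⟨?_, rfl, ?_⟩
            · rw [hG', SimpleGraph.fromEdgeSet_adj]
              exact ⟨hsv, hadj₁.ne⟩
            · rw [← hseq, ← hft, P1 t htle s₁ h₁, hpos₁]
              simp [omap, mem_vertsOf hsv (Sym2.mem_mk_left u₁ v₁)]
          · by_cases hvH : v₁ ∈ vertsOf H
            · simp only [trM, dif_pos h₁, if_neg hsv, if_pos hvH] at hm'; cases hm'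
            · simp only [trM, dif_pos h₁, if_neg hsv, if_neg hvH] at hm'; cases hm'
        · simp only [trM, dif_neg h₁] at hm'; cases hm'
  -- the clean-set invariant
  have P2 : ∀ t, t ≤ S.len → ∀ e ∈ S.clean G t, e ∈ H → e ∈ S'.clean G' (F t) := by
    intro t
    induction t with
    | zero => intro _ e he _; simp [Strategy.clean] at he
    | succ t ih =>
      intro ht1 e he heH
      have htl : t < S.len := ht1
      have ht : t ≤ S.len := le_of_lt htl
      obtain ⟨he1, hne⟩ := mem_clean_succ.1 he
      by_cases hact : act S H i t
      case neg =>
        have hF1 : F (t+1) = F t := by rw [hF, fc_succ, if_neg hact]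
        rw [hF1]
        refine ih ht e ?_ heH
        rcases he1 with h | h
        · exact h
        · exfalso
          obtain ⟨s, u1, v1, hm, heq⟩ := h.2
          obtain ⟨-, hcuv, -⟩ := hv.slide_ok t htl s u1 v1 hm
          apply hact
          unfold act; rw [hm]
          show S.colS s = i
          rw [← hcuv, ← heq, hcol e heH]
      case pos =>
        have hF1 : F (t+1) = F t + 1 := by rw [hF, fc_succ, if_pos hact]
        have hmem1 : e ∈ S'.clean G' (F t) ∪ {e' | e' ∈ G'.edgeSet ∧ S'.sweeps (F t) e'} := by
          rcases he1 with h | h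
          · exact Or.inl (ih ht e h heH)
          · obtain ⟨s, u1, v1, hm, heq⟩ := h.2
            obtain ⟨-, hcuv, -⟩ := hv.slide_ok t htl s u1 v1 hm
            have h₁ : S.colS s = i := by rw [← hcuv, ← heq, hcol e heH]
            have hsv : (s(u1, v1) : Sym2 V) ∈ H := heq ▸ heH
            have hmv : S'.moves (F t) = Move.slide (φ ⟨s, h₁⟩) u1 v1 := by
              rw [hS', hF, sim_moves S H i φ d hact, hm]
              simp [trM, h₁, hsv]
            exact Or.inr ⟨by rw [hG'edge]; exact heH, φ ⟨s, h₁⟩, u1, v1, hmv, heq⟩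
        rw [hF1]
        refine mem_clean_succ.2 ⟨hmem1, ?_⟩
        intro hexp
        obtain ⟨u0, w0, hu0, ⟨f₁, hf₁G', hf₁C, hwf0⟩, p0, hp0⟩ := hexp
        have hf₁H : f₁ ∈ H := by rw [← hG'edge]; exact hf₁G'
        -- `f₁` is contaminated for `S` as well
        have hf₁S : f₁ ∉ S.clean G t ∪ {e' | e' ∈ G.edgeSet ∧ S.sweeps t e'} := by
          rintro (h | h)
          · exact hf₁C (Or.inl (ih ht f₁ h hf₁H))
          · obtain ⟨s, u1, v1, hm, heq⟩ := h.2
            obtain ⟨-, hcuv, -⟩ := hv.slide_ok t htl s u1 v1 hm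
            have h₁ : S.colS s = i := by rw [← hcuv, ← heq, hcol f₁ hf₁H]
            have hsv : (s(u1, v1) : Sym2 V) ∈ H := heq ▸ hf₁H
            have hmv : S'.moves (F t) = Move.slide (φ ⟨s, h₁⟩) u1 v1 := by
              rw [hS', hF, sim_moves S H i φ d hact, hm]
              simp [trM, h₁, hsv]
            exact hf₁C (Or.inr ⟨by rw [hG'edge]; exact hf₁H, φ ⟨s, h₁⟩, u1, v1, hmv, heq⟩)
        -- minimal-length searcher-free witness
        have hPex : ∃ m : ℕ, ∃ (u w : V) (q : G'.Walk u w), q.length = m ∧ u ∈ e ∧ w ∈ f₁ ∧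
            ∀ x ∈ q.support, x ∉ S'.occupied (F t + 1) :=
          ⟨p0.length, u0, w0, p0, rfl, hu0, hwf0, hp0⟩
        obtain ⟨u, w, q, hql, hue, hwf, hq⟩ := Nat.find_spec hPex
        -- key claim: the minimal witness avoids the `S`-occupied vertices as well
        have hclaim : ∀ x ∈ q.support, x ∉ S.occupied (t+1) := by
          intro x hxs hxS
          have hxH : x ∈ vertsOf H := walk_support_verts q (mem_vertsOf heH hue) x hxs
          have hx' : x ∉ S'.occupied (F (t+1)) := by rw [hF1]; exact hq x hxs
          have hjx : IsJunction G c x := hguard (t+1) ht1 x hxH hxS hx'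
          have huniq := junction_unique_edge hT hAP hjx
          by_cases hxu : x = u
          · subst hxu
            by_cases hqn : q.Nil
            · have huw : x = w := hqn.eq
              have hef : e = f₁ := huniq e heH f₁ hf₁H hue (huw ▸ hwf)
              exact hf₁C (hef ▸ hmem1)
            · obtain ⟨z, hadj, q', hq'⟩ := SimpleGraph.Walk.not_nil_iff.1 hqn
              have hadj' : s(x, z) ∈ H := by
                rw [hG'] at hadj
                exact ((SimpleGraph.fromEdgeSet_adj _).1 hadj).1
              have heq' : e = s(x, z) := huniq e heH _ hadj' hue (Sym2.mem_mk_left x z)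
              have hlt : q'.length < Nat.find hPex := by
                have hlen : q.length = q'.length + 1 := by
                  rw [hq', SimpleGraph.Walk.length_cons]
                omega
              exact Nat.find_min hPex hlt
                ⟨z, w, q', rfl, by rw [heq']; exact Sym2.mem_mk_right x z, hwf,
                  fun y hy => hq y (by rw [hq', SimpleGraph.Walk.support_cons]; exact List.mem_cons_of_mem _ hy)⟩
          · by_cases hxw : x = w
            · subst hxw
              have hqn : ¬ q.Nil := fun hn => hxu hn.eq.symm
              have hqrn : ¬ q.reverse.Nil := by
                rw [SimpleGraph.Walk.not_nil_iff_lt_length, SimpleGraph.Walk.length_reverse]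
                exact SimpleGraph.Walk.not_nil_iff_lt_length.1 hqn
              obtain ⟨y, hadj, r, hr⟩ := SimpleGraph.Walk.not_nil_iff.1 hqrn
              have hadj' : s(x, y) ∈ H := by
                rw [hG'] at hadj
                exact ((SimpleGraph.fromEdgeSet_adj _).1 hadj).1
              have hf₁eq : f₁ = s(x, y) := huniq f₁ hf₁H _ hadj' hwf (Sym2.mem_mk_left x y)
              have hlen : q.length = r.length + 1 := by
                rw [← SimpleGraph.Walk.length_reverse q, hr, SimpleGraph.Walk.length_cons]
              have hlt : r.reverse.length < Nat.find hPex := by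
                rw [SimpleGraph.Walk.length_reverse, ← hql]
                omega
              refine Nat.find_min hPex hlt
                ⟨u, y, r.reverse, rfl, hue, by rw [hf₁eq]; exact Sym2.mem_mk_right x y, ?_⟩
              intro y' hy'
              apply hq y'
              rw [SimpleGraph.Walk.support_reverse] at hy'
              have : y' ∈ (SimpleGraph.Walk.cons hadj r).support :=
                SimpleGraph.Walk.support_cons hadj r ▸ List.mem_cons_of_mem _ (List.mem_reverse.1 hy')
              rw [← hr] at this
              rw [SimpleGraph.Walk.support_reverse] at this
              exact List.mem_reverse.1 this
            · -- interior vertex: shortcut the walk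
              have hspec := q.take_spec hxs
              set q₁ := q.takeUntil x hxs with hq₁
              set q₂ := q.dropUntil x hxs with hq₂
              have h₁n : ¬ q₁.Nil := fun h => hxu h.eq.symm
              have h₂n : ¬ q₂.Nil := fun h => hxw h.eq
              have h₁rn : ¬ q₁.reverse.Nil := by
                rw [SimpleGraph.Walk.not_nil_iff_lt_length, SimpleGraph.Walk.length_reverse]
                exact SimpleGraph.Walk.not_nil_iff_lt_length.1 h₁n
              obtain ⟨y, hadjy, r₁, hr₁⟩ := SimpleGraph.Walk.not_nil_iff.1 h₁rn
              obtain ⟨z, hadjz, r₂, hr₂⟩ := SimpleGraph.Walk.not_nil_iff.1 h₂n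
              have hyH : s(x, y) ∈ H := by
                rw [hG'] at hadjy
                exact ((SimpleGraph.fromEdgeSet_adj _).1 hadjy).1
              have hzH : s(x, z) ∈ H := by
                rw [hG'] at hadjz
                exact ((SimpleGraph.fromEdgeSet_adj _).1 hadjz).1
              have heqyz : (s(x, y) : Sym2 V) = s(x, z) :=
                huniq _ hyH _ hzH (Sym2.mem_mk_left x y) (Sym2.mem_mk_left x z)
              have hyz : y = z := by
                rcases Sym2.eq_iff.1 heqyz with ⟨-, h⟩ | ⟨h1, h2⟩
                · exact h
                · exact absurd h1 hadjz.ne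
              subst hyz
              have hlen1 : q₁.length = r₁.length + 1 := by
                rw [← SimpleGraph.Walk.length_reverse q₁, hr₁, SimpleGraph.Walk.length_cons]
              have hlen2 : q₂.length = r₂.length + 1 := by
                rw [hr₂, SimpleGraph.Walk.length_cons]
              have hlenq : q.length = q₁.length + q₂.length := by
                rw [← hspec, SimpleGraph.Walk.length_append]
              have hlt : (r₁.reverse.append r₂).length < Nat.find hPex := by
                rw [SimpleGraph.Walk.length_append, SimpleGraph.Walk.length_reverse, ← hql]
                omega
              refine Nat.find_min hPex hlt ⟨u, w, r₁.reverse.append r₂, rfl, hue, hwf, ?_⟩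
              intro y' hy'
              apply hq y'
              rw [SimpleGraph.Walk.support_append] at hy'
              rcases List.mem_append.1 hy' with h | h
              · -- from `r₁`
                rw [SimpleGraph.Walk.support_reverse] at h
                have h' : y' ∈ (SimpleGraph.Walk.cons hadjy r₁).support :=
                  SimpleGraph.Walk.support_cons hadjy r₁ ▸ List.mem_cons_of_mem _ (List.mem_reverse.1 h)
                rw [← hr₁, SimpleGraph.Walk.support_reverse] at h'
                exact SimpleGraph.Walk.support_takeUntil_subset q hxs (List.mem_reverse.1 h')
              · -- from `r₂`
                have h' : y' ∈ (SimpleGraph.Walk.cons hadjz r₂).support :=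
                  SimpleGraph.Walk.support_cons hadjz r₂ ▸
                    List.mem_cons_of_mem _ (List.mem_of_mem_tail h)
                rw [← hr₂] at h'
                exact SimpleGraph.Walk.support_dropUntil_subset q hxs h'
        -- transfer the witness to `G`, contradicting `hne`
        apply hne
        refine ⟨u, w, hue, ⟨f₁, hHe hf₁H, hf₁S, hwf⟩,
          q.transfer G (fun e' he' => hHe (walk_edges_mem q e' he')), ?_⟩
        rw [SimpleGraph.Walk.support_transfer]
        exact hclaim
  -- the simulated strategy cleans all of `G'`
  have hclean' : S'.CleansAll G' := by
    rw [Strategy.CleansAll]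
    apply Set.Subset.antisymm (clean_subset_edgeSet S' G' S'.len)
    intro e he
    have heH : e ∈ H := by rw [← hG'edge]; exact he
    have hec : e ∈ S.clean G S.len := by rw [hc]; exact hHe heH
    have h2 := P2 S.len le_rfl e hec heH
    simpa [hS', sim, hF] using h2
  -- conclude
  unfold sn hsn
  exact Nat.sInf_le ⟨S', hval', hclean'⟩

end GS
end

section
/- If T is a tree with edge coloring c and v is a junction belonging to some area H of T, then v is a leaf of H (i.e., v has degree one in H). -/
namespace GS

variable {V : Type} {k : ℕ}

/-- If `T` is a tree with edge coloring `c` and `v` is a junction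
belonging to some area `H` of `T`, then `v` is a leaf of `H`: it has exactly one
neighbour in the subgraph spanned by the edges of `H`. -/
theorem junction_is_leaf_of_area {V : Type} (G : SimpleGraph V) (hT : G.IsTree)
    (c : Sym2 V → ℕ) (H : Set (Sym2 V)) (hH : IsArea G c H)
    (v : V) (hv : IsJunction G c v) (hvH : v ∈ vertsOf H) :
    ∃! w, (SimpleGraph.fromEdgeSet H).Adj v w := by
  classical
  obtain ⟨e, heH, hve⟩ := hvH
  have hHsub : H ⊆ G.edgeSet := hH.2.1.1
  have hle : SimpleGraph.fromEdgeSet H ≤ G := by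
    have := SimpleGraph.fromEdgeSet_mono hHsub
    rwa [SimpleGraph.fromEdgeSet_edgeSet] at this
  obtain ⟨w0, rfl⟩ := Sym2.mem_iff_exists.mp hve
  have hadj0 : G.Adj v w0 := (G.mem_edgeSet).1 (hHsub heH)
  have hAdj0 : (SimpleGraph.fromEdgeSet H).Adj v w0 :=
    (SimpleGraph.fromEdgeSet_adj _).mpr ⟨heH, hadj0.ne⟩
  -- core: no two distinct neighbours
  have key : ∀ w1 w2, (SimpleGraph.fromEdgeSet H).Adj v w1 →
      (SimpleGraph.fromEdgeSet H).Adj v w2 → w1 = w2 := by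
    intro w1 w2 h1 h2
    by_contra hne
    have he1 : s(v, w1) ∈ H := ((SimpleGraph.fromEdgeSet_adj _).mp h1).1
    have he2 : s(v, w2) ∈ H := ((SimpleGraph.fromEdgeSet_adj _).mp h2).1
    have hg1 : G.Adj v w1 := hle h1
    have hg2 : G.Adj v w2 := hle h2
    have hef : s(v, w1) ≠ s(v, w2) := by
      exact fun h => hne (Sym2.congr_right.mp h)
    obtain ⟨u, w, hu, hw, p, hp⟩ := hH.2.1.2 _ he1 _ he2 hef
    rcases Sym2.mem_iff.mp hu with rfl | rfl
    · exact hp _ p.start_mem_support hv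
    rcases Sym2.mem_iff.mp hw with rfl | rfl
    · exact hp _ p.end_mem_support hv
    -- u = w1, w = w2 : the tree path from w1 to w2 goes through v
    have hedges : ∀ f ∈ p.edges, f ∈ G.edgeSet := fun f hf =>
      SimpleGraph.edgeSet_mono hle (p.edges_subset_edgeSet hf)
    set p' : G.Walk u w := p.transfer G hedges with hp'def
    have hsupp : p'.support = p.support := SimpleGraph.Walk.support_transfer p hedges
    set P : G.Walk u w := SimpleGraph.Walk.cons hg1.symm (SimpleGraph.Walk.cons hg2 SimpleGraph.Walk.nil) with hPdef
    have hPpath : P.IsPath := by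
      rw [hPdef]
      refine SimpleGraph.Walk.IsPath.cons ?_ ?_
      · refine SimpleGraph.Walk.IsPath.cons (SimpleGraph.Walk.IsPath.nil) ?_
        simpa using hg2.ne
      · simp only [SimpleGraph.Walk.support_cons, SimpleGraph.Walk.support_nil,
          List.mem_cons, List.mem_singleton]
        push_neg
        exact ⟨hg1.ne', hne, by simp⟩
    have hbp : p'.bypass.IsPath := SimpleGraph.Walk.bypass_isPath p'
    have := (hT.existsUnique_path u w).unique hbp hPpath
    have hvP : v ∈ P.support := by simp [hPdef]
    have hvp : v ∈ p.support := by
      rw [← hsupp]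
      exact SimpleGraph.Walk.support_bypass_subset p' (this ▸ hvP)
    exact hp v hvp hv
  exact ⟨w0, hAdj0, fun w hw => key w w0 hw hAdj0⟩

end GS
end

section
/- If T is a tree with edge coloring c, then any two distinct areas of T share at most one common vertex, and any such common vertex is a junction. -/
namespace GS

variable {V : Type} {k : ℕ}

section Aux

open SimpleGraph

variable {V : Type} {G : SimpleGraph V} {c : Sym2 V → ℕ}

lemma mapLe_support {G G' : SimpleGraph V} (h : G ≤ G') {u w : V} (p : G.Walk u w) :
    (p.mapLe h).support = p.support := by
  have hid : ⇑(SimpleGraph.Hom.ofLE h) = id := rfl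
  simp [Walk.mapLe, Walk.support_map, hid]

lemma mapLe_edges {G G' : SimpleGraph V} (h : G ≤ G') {u w : V} (p : G.Walk u w) :
    (p.mapLe h).edges = p.edges := by
  have hid : ⇑(SimpleGraph.Hom.ofLE h) = id := rfl
  simp [Walk.mapLe, Walk.edges_map, hid, Sym2.map_id]

/-- From an area, reach a designated non-junction vertex of an edge. -/
lemma area_walk_to_vertex {H : Set (Sym2 V)} (hA : AreaProp G c H) {e' e₀ : Sym2 V}
    (he' : e' ∈ H) (he₀ : e₀ ∈ H) {v : V} (hv : v ∈ e₀) (hj : ¬ IsJunction G c v) :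
    ∃ u, u ∈ e' ∧ ∃ p : (SimpleGraph.fromEdgeSet H).Walk u v,
      ∀ x ∈ p.support, ¬ IsJunction G c x := by
  by_cases hee : e' = e₀
  · subst hee
    exact ⟨v, hv, Walk.nil, by simpa using hj⟩
  · obtain ⟨u, w, hu, hw, p, hp⟩ := hA.2 e' he' e₀ he₀ hee
    by_cases hwv : w = v
    · subst hwv; exact ⟨u, hu, p, hp⟩
    · have hadj : (SimpleGraph.fromEdgeSet H).Adj w v := by
        rw [SimpleGraph.fromEdgeSet_adj]
        exact ⟨((Sym2.mem_and_mem_iff hwv).1 ⟨hw, hv⟩) ▸ he₀, hwv⟩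
      refine ⟨u, hu, p.append (Walk.cons hadj Walk.nil), ?_⟩
      intro x hx
      rw [Walk.mem_support_append_iff] at hx
      rcases hx with hx | hx
      · exact hp x hx
      · simp only [Walk.support_cons, Walk.support_nil, List.mem_cons,
          List.not_mem_nil, or_false] at hx
        rcases hx with hx | hx
        · exact hx ▸ hp w p.end_mem_support
        · exact hx ▸ hj

lemma eq_of_areaProp_union {H₁ H₂ : Set (Sym2 V)} (h1 : IsArea G c H₁) (h2 : IsArea G c H₂)
    (hU : AreaProp G c (H₁ ∪ H₂)) : H₁ = H₂ := by
  have e1 := h1.2.2 _ hU Set.subset_union_left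
  have e2 := h2.2.2 _ hU Set.subset_union_right
  exact e1.symm.trans e2

/-- Cross connection through a common non-junction vertex. -/
lemma cross_of_vertex {H₁ H₂ : Set (Sym2 V)} (h1 : AreaProp G c H₁) (h2 : AreaProp G c H₂)
    {e₀ f₀ : Sym2 V} {v : V} (he₀ : e₀ ∈ H₁) (hf₀ : f₀ ∈ H₂) (hv1 : v ∈ e₀) (hv2 : v ∈ f₀)
    (hj : ¬ IsJunction G c v) {e' f' : Sym2 V} (he' : e' ∈ H₁) (hf' : f' ∈ H₂) :
    ∃ u w : V, u ∈ e' ∧ w ∈ f' ∧ ∃ p : (SimpleGraph.fromEdgeSet (H₁ ∪ H₂)).Walk u w,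
      ∀ x ∈ p.support, ¬ IsJunction G c x := by
  obtain ⟨u, hu, p₁, hp₁⟩ := area_walk_to_vertex h1 he' he₀ hv1 hj
  obtain ⟨w, hw, p₂, hp₂⟩ := area_walk_to_vertex h2 hf' hf₀ hv2 hj
  have l1 := SimpleGraph.fromEdgeSet_mono (Set.subset_union_left (s := H₁) (t := H₂))
  have l2 := SimpleGraph.fromEdgeSet_mono (Set.subset_union_right (s := H₁) (t := H₂))
  refine ⟨u, w, hu, hw, (p₁.mapLe l1).append (p₂.mapLe l2).reverse, ?_⟩
  intro x hx
  rw [Walk.mem_support_append_iff] at hx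
  rcases hx with hx | hx
  · rw [mapLe_support] at hx; exact hp₁ x hx
  · rw [Walk.support_reverse, List.mem_reverse, mapLe_support] at hx; exact hp₂ x hx

/-- Cross connection through a common edge. -/
lemma cross_of_edge {H₁ H₂ : Set (Sym2 V)} (h1 : AreaProp G c H₁) (h2 : AreaProp G c H₂)
    {e : Sym2 V} (he1 : e ∈ H₁) (he2 : e ∈ H₂) {e' f' : Sym2 V}
    (he' : e' ∈ H₁) (hne1 : e' ≠ e) (hf' : f' ∈ H₂) (hne2 : f' ≠ e) :
    ∃ u w : V, u ∈ e' ∧ w ∈ f' ∧ ∃ p : (SimpleGraph.fromEdgeSet (H₁ ∪ H₂)).Walk u w,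
      ∀ x ∈ p.support, ¬ IsJunction G c x := by
  obtain ⟨u, w₁, hu, hw₁, p₁, hp₁⟩ := h1.2 e' he' e he1 hne1
  obtain ⟨w, w₂, hw, hw₂, p₂, hp₂⟩ := h2.2 f' hf' e he2 hne2
  have l1 := SimpleGraph.fromEdgeSet_mono (Set.subset_union_left (s := H₁) (t := H₂))
  have l2 := SimpleGraph.fromEdgeSet_mono (Set.subset_union_right (s := H₁) (t := H₂))
  have hj1 : ¬ IsJunction G c w₁ := hp₁ w₁ p₁.end_mem_support
  have hj2 : ¬ IsJunction G c w₂ := hp₂ w₂ p₂.end_mem_support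
  by_cases h12 : w₁ = w₂
  · subst h12
    refine ⟨u, w, hu, hw, (p₁.mapLe l1).append (p₂.mapLe l2).reverse, ?_⟩
    intro x hx
    rw [Walk.mem_support_append_iff] at hx
    rcases hx with hx | hx
    · rw [mapLe_support] at hx; exact hp₁ x hx
    · rw [Walk.support_reverse, List.mem_reverse, mapLe_support] at hx; exact hp₂ x hx
  · have hadj : (SimpleGraph.fromEdgeSet (H₁ ∪ H₂)).Adj w₁ w₂ := by
      rw [SimpleGraph.fromEdgeSet_adj]
      exact ⟨((Sym2.mem_and_mem_iff h12).1 ⟨hw₁, hw₂⟩) ▸ Set.mem_union_left _ he1, h12⟩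
    refine ⟨u, w, hu, hw, (p₁.mapLe l1).append (Walk.cons hadj (p₂.mapLe l2).reverse), ?_⟩
    intro x hx
    rw [Walk.mem_support_append_iff] at hx
    rcases hx with hx | hx
    · rw [mapLe_support] at hx; exact hp₁ x hx
    · rw [Walk.support_cons] at hx
      rcases List.mem_cons.1 hx with hx | hx
      · exact hx ▸ hj1
      · rw [Walk.support_reverse, List.mem_reverse, mapLe_support] at hx; exact hp₂ x hx

end Aux

section Aux2

open SimpleGraph

variable {V : Type} {G : SimpleGraph V} {c : Sym2 V → ℕ}

/-- Transfer a same-area connection to the union. -/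
lemma same_side {H₁ H₂ H : Set (Sym2 V)} (h : AreaProp G c H)
    (hsub : H ⊆ H₁ ∪ H₂) {e' f' : Sym2 V} (he' : e' ∈ H) (hf' : f' ∈ H) (hne : e' ≠ f') :
    ∃ u w : V, u ∈ e' ∧ w ∈ f' ∧ ∃ p : (SimpleGraph.fromEdgeSet (H₁ ∪ H₂)).Walk u w,
      ∀ x ∈ p.support, ¬ IsJunction G c x := by
  obtain ⟨u, w, hu, hw, p, hp⟩ := h.2 e' he' f' hf' hne
  refine ⟨u, w, hu, hw, p.mapLe (SimpleGraph.fromEdgeSet_mono hsub), ?_⟩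
  intro x hx; rw [mapLe_support] at hx; exact hp x hx

lemma merge_of_vertex {H₁ H₂ : Set (Sym2 V)} (h1 : IsArea G c H₁) (h2 : IsArea G c H₂)
    {e₀ f₀ : Sym2 V} {v : V} (he₀ : e₀ ∈ H₁) (hf₀ : f₀ ∈ H₂) (hv1 : v ∈ e₀) (hv2 : v ∈ f₀)
    (hj : ¬ IsJunction G c v) : H₁ = H₂ := by
  refine eq_of_areaProp_union h1 h2 ⟨Set.union_subset h1.2.1.1 h2.2.1.1, ?_⟩
  intro e' he' f' hf' hne
  rcases he' with he' | he' <;> rcases hf' with hf' | hf'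
  · exact same_side h1.2.1 Set.subset_union_left he' hf' hne
  · exact cross_of_vertex h1.2.1 h2.2.1 he₀ hf₀ hv1 hv2 hj he' hf'
  · rw [Set.union_comm H₁ H₂]
    exact cross_of_vertex h2.2.1 h1.2.1 hf₀ he₀ hv2 hv1 hj he' hf'  
  · exact same_side h2.2.1 Set.subset_union_right he' hf' hne

lemma merge_of_edge {H₁ H₂ : Set (Sym2 V)} (h1 : IsArea G c H₁) (h2 : IsArea G c H₂)
    {e : Sym2 V} (he1 : e ∈ H₁) (he2 : e ∈ H₂) : H₁ = H₂ := by
  refine eq_of_areaProp_union h1 h2 ⟨Set.union_subset h1.2.1.1 h2.2.1.1, ?_⟩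
  intro e' he' f' hf' hne
  rcases he' with he' | he' <;> rcases hf' with hf' | hf'
  · exact same_side h1.2.1 Set.subset_union_left he' hf' hne
  · by_cases h : e' = e
    · exact same_side h2.2.1 Set.subset_union_right (h ▸ he2) hf' hne
    · by_cases h' : f' = e
      · exact same_side h1.2.1 Set.subset_union_left he' (h' ▸ he1) hne
      · exact cross_of_edge h1.2.1 h2.2.1 he1 he2 he' h hf' h'
  · by_cases h : e' = e
    · exact same_side h1.2.1 Set.subset_union_left (h ▸ he1) hf' hne
    · by_cases h' : f' = e
      · exact same_side h2.2.1 Set.subset_union_right he' (h' ▸ he2) hne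
      · rw [Set.union_comm H₁ H₂]
        exact cross_of_edge h2.2.1 h1.2.1 he2 he1 he' h hf' h' 
  · exact same_side h2.2.1 Set.subset_union_right he' hf' hne

/-- Vertices spanned by an area are connected inside the area. -/
lemma area_preconnect {H : Set (Sym2 V)} (hA : AreaProp G c H) {v w : V}
    (hv : v ∈ vertsOf H) (hw : w ∈ vertsOf H) :
    Nonempty ((SimpleGraph.fromEdgeSet H).Walk v w) := by
  obtain ⟨e₁, he₁, hv₁⟩ := hv
  obtain ⟨f₁, hf₁, hw₁⟩ := hw
  have edge_walk : ∀ (g : Sym2 V), g ∈ H → ∀ a b : V, a ∈ g → b ∈ g →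
      Nonempty ((SimpleGraph.fromEdgeSet H).Walk a b) := by
    intro g hg a b ha hb
    by_cases hab : a = b
    · exact hab ▸ ⟨Walk.nil⟩
    · refine ⟨Walk.cons ?_ Walk.nil⟩
      rw [SimpleGraph.fromEdgeSet_adj]
      exact ⟨((Sym2.mem_and_mem_iff hab).1 ⟨ha, hb⟩) ▸ hg, hab⟩
  by_cases hef : e₁ = f₁
  · exact edge_walk e₁ he₁ v w hv₁ (hef ▸ hw₁)
  · obtain ⟨u, x, hu, hx, p, _⟩ := hA.2 e₁ he₁ f₁ hf₁ hef
    obtain ⟨q₁⟩ := edge_walk e₁ he₁ v u hv₁ hu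
    obtain ⟨q₂⟩ := edge_walk f₁ hf₁ x w hx hw₁
    exact ⟨(q₁.append p).append q₂⟩

end Aux2

/-- In a tree with edge coloring `c`, any two distinct areas share
at most one common vertex, and any such common vertex is a junction. -/
theorem areas_share_at_most_one_junction {V : Type} (G : SimpleGraph V) (hT : G.IsTree)
    (c : Sym2 V → ℕ) (H₁ H₂ : Set (Sym2 V))
    (h1 : IsArea G c H₁) (h2 : IsArea G c H₂) (hne : H₁ ≠ H₂) :
    (vertsOf H₁ ∩ vertsOf H₂).Subsingleton ∧
      ∀ v ∈ vertsOf H₁ ∩ vertsOf H₂, IsJunction G c v := by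
  classical
  constructor
  · intro v hv w hw
    by_contra hvw
    have hle1 : SimpleGraph.fromEdgeSet H₁ ≤ G :=
      le_of_le_of_eq (SimpleGraph.fromEdgeSet_mono h1.2.1.1) (SimpleGraph.fromEdgeSet_edgeSet G)
    have hle2 : SimpleGraph.fromEdgeSet H₂ ≤ G :=
      le_of_le_of_eq (SimpleGraph.fromEdgeSet_mono h2.2.1.1) (SimpleGraph.fromEdgeSet_edgeSet G)
    obtain ⟨W₁⟩ := area_preconnect h1.2.1 hv.1 hw.1
    obtain ⟨W₂⟩ := area_preconnect h2.2.1 hv.2 hw.2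
    set P₁ := (W₁.mapLe hle1).toPath with hP₁
    set P₂ := (W₂.mapLe hle2).toPath with hP₂
    have hPP : P₁ = P₂ := hT.2.path_unique P₁ P₂
    have hlen : P₁.val.length ≠ 0 := fun h0 => hvw (SimpleGraph.Walk.eq_of_length_eq_zero h0)
    have hnil : P₁.val.edges ≠ [] := by
      intro h0
      apply hlen
      rw [← P₁.val.length_edges, h0]
      rfl
    obtain ⟨e, he⟩ := List.exists_mem_of_ne_nil _ hnil
    have he1 : e ∈ H₁ := by
      have h' := SimpleGraph.Walk.edges_toPath_subset (W₁.mapLe hle1) he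
      rw [mapLe_edges] at h'
      have h'' := W₁.edges_subset_edgeSet h'
      rw [SimpleGraph.edgeSet_fromEdgeSet] at h''
      exact h''.1
    have he2 : e ∈ H₂ := by
      rw [hPP] at he
      have h' := SimpleGraph.Walk.edges_toPath_subset (W₂.mapLe hle2) he
      rw [mapLe_edges] at h'
      have h'' := W₂.edges_subset_edgeSet h'
      rw [SimpleGraph.edgeSet_fromEdgeSet] at h''
      exact h''.1
    exact hne (merge_of_edge h1 h2 he1 he2)
  · rintro v ⟨⟨e, he, hve⟩, ⟨f, hf, hvf⟩⟩
    by_contra hj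
    exact hne (merge_of_vertex h1 h2 he hf hve hvf hj)


end GS
end

section
/- In the NP-hardness construction T_SAT for a 3-SAT instance with n variables and m clauses, any heterogeneous search strategy using exactly 3n + 2m + 2 searchers must assign colors as follows: one searcher for each of the 3n colors T_p, F_p, X_p (p = 1,…,n), two searchers for each clause color C_d (d = 1,…,m), and two searchers of the background color R. -/
namespace GS

variable {V : Type} {k : ℕ}

/-! ## The 3-SAT reduction tree `T_SAT` -/

/-- Color of the literal `l_{d,j}`: `T_p` (= `1+n+p`) for a positive literal on
variable `p`, `F_p` (= `1+2n+p`) for a negated one.  Color `0` is `R`,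
color `1+p` is `X_p`, color `1+3n+d` is `C_d`. -/
def litColor (n : ℕ) {m : ℕ} (lit : Fin m → Fin 3 → Fin n × Bool) (d : Fin m) (j : Fin 3) : ℕ :=
  if (lit d j).2 then 1 + n + ((lit d j).1 : ℕ) else 1 + 2*n + ((lit d j).1 : ℕ)

/-- Color of the subtree `H_z` of index `i`. -/
def hzColor (n : ℕ) (i : ℕ) : ℕ :=
  if i < 3*n then i + 1 else 1 + 3*n + (i - 3*n) / 2

/-- Vertices of `T_SAT` for a 3-SAT instance with `n` variables and `m` clauses:
the spine path `v_1 … v_l` (`l = 4n+3m+5`), pendants at `v_1`, `v_l`, `v_b`, the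
`3n+2m` subtrees `H_z`, the quintuplicated subtrees `L_x` and `L'_{C_d}` (the latter
on two sides), the variable gadgets `S_p`/`S_{-p}`, and the clause gadgets `L_{d,j}`. -/
inductive TSatV (n m : ℕ) where
  | pathv (i : Fin (4*n+3*m+5))
  | pend1 (b : Bool)
  | pendl (b : Bool)
  | pendb
  | hsub (i : Fin (3*n+2*m)) (j : Fin 5)
  | lsub (x : Fin (2*n)) (cp : Fin 5) (t : Fin 11)
  | lsub' (d : Fin m) (side : Bool) (cp : Fin 5) (t : Fin 11)
  | ssub (p : Fin n) (sign : Bool) (t : Fin 7)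
  | clsub (d : Fin m) (j : Fin 3) (t : Fin 10)

open TSatV in
/-- Directed edge/color table of `T_SAT`: `some q` = an edge of color `q`
(`q = 0` is the background color `R`), `none` = no edge. -/
def TSg0 (n m : ℕ) (lit : Fin m → Fin 3 → Fin n × Bool) :
    TSatV n m → TSatV n m → Option ℕ
  | pathv i, pathv i' => if (i' : ℕ) = (i : ℕ) + 1 then some 0 else none
  | pathv i, pend1 _ => if (i : ℕ) = 0 then some 0 else none
  | pathv i, pendl _ => if (i : ℕ) = 4*n+3*m+4 then some 0 else none
  | pathv i, pendb => if (i : ℕ) = 4*n+2*m+2 then some 0 else none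
  | pathv i, hsub i' j => if (i : ℕ) = (i' : ℕ) + 1 ∧ (j : ℕ) = 0 then some 0 else none
  | hsub i j, hsub i' j' =>
      if (i : ℕ) = (i' : ℕ) then
        (if (j : ℕ) = 0 ∧ (j' : ℕ) = 1 then some (hzColor n i)
         else if (j : ℕ) = 1 ∧ (j' : ℕ) = 2 then some 0
         else if (j : ℕ) = 2 ∧ ((j' : ℕ) = 3 ∨ (j' : ℕ) = 4) then some 0 else none)
      else none
  | pathv i, lsub _ _ t => if (i : ℕ) = 3*n+2*m+1 ∧ (t : ℕ) = 0 then some 0 else none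
  | lsub x cp t, lsub x' cp' t' =>
      if x = x' ∧ cp = cp' then
        (if (t : ℕ) = 0 ∧ (t' : ℕ) = 1 then some (1 + (x : ℕ) % n)
         else if (t : ℕ) = 1 ∧ 2 ≤ (t' : ℕ) ∧ (t' : ℕ) ≤ 4 then
           some (if (x : ℕ) < n then 1 + n + (x : ℕ) else 1 + 2*n + ((x : ℕ) - n))
         else if 2 ≤ (t : ℕ) ∧ (t : ℕ) ≤ 4 ∧
             ((t' : ℕ) = 2*(t : ℕ)+1 ∨ (t' : ℕ) = 2*(t : ℕ)+2) then some 0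
         else none)
      else none
  | pathv i, lsub' _ side _ t =>
      if ((side = false ∧ (i : ℕ) = 3*n+2*m+1) ∨ (side = true ∧ (i : ℕ) = 4*n+3*m+3))
          ∧ (t : ℕ) = 0 then some 0 else none
  | lsub' d side cp t, lsub' d' side' cp' t' =>
      if d = d' ∧ side = side' ∧ cp = cp' then
        (if (t : ℕ) = 0 ∧ (t' : ℕ) = 1 then some (1 + 3*n + (d : ℕ))
         else if (t : ℕ) = 1 ∧ 2 ≤ (t' : ℕ) ∧ (t' : ℕ) ≤ 4 then some (1 + 3*n + (d : ℕ))
         else if 2 ≤ (t : ℕ) ∧ (t : ℕ) ≤ 4 ∧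
             ((t' : ℕ) = 2*(t : ℕ)+1 ∨ (t' : ℕ) = 2*(t : ℕ)+2) then some 0
         else none)
      else none
  | pathv i, ssub p _ t =>
      if (i : ℕ) = 3*n+2*m+2 + (p : ℕ) ∧ (t : ℕ) = 0 then some 0 else none
  | ssub p sign t, ssub p' sign' t' =>
      if p = p' ∧ sign = sign' then
        (if (t : ℕ) = 0 ∧ (t' : ℕ) = 1 then
           some (if sign then 1 + n + (p : ℕ) else 1 + 2*n + (p : ℕ))
         else if (t : ℕ) = 1 ∧ (t' : ℕ) = 2 then some 0
         else if (t : ℕ) = 2 ∧ (t' : ℕ) = 3 then some (1 + (p : ℕ))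
         else if (t : ℕ) = 3 ∧ (t' : ℕ) = 4 then some 0
         else if (t : ℕ) = 4 ∧ ((t' : ℕ) = 5 ∨ (t' : ℕ) = 6) then some 0
         else none)
      else none
  | pathv i, clsub d _ t =>
      if (i : ℕ) = 4*n+2*m+3 + (d : ℕ) ∧ (t : ℕ) = 0 then some 0 else none
  | clsub d j t, clsub d' j' t' =>
      if d = d' ∧ j = j' then
        (if (t : ℕ) = 0 ∧ ((t' : ℕ) = 1 ∨ (t' : ℕ) = 2) then some (1 + 3*n + (d : ℕ))
         else if (t : ℕ) = 0 ∧ (t' : ℕ) = 3 then some (litColor n lit d j)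
         else if 1 ≤ (t : ℕ) ∧ (t : ℕ) ≤ 3 ∧
             ((t' : ℕ) = 2*(t : ℕ)+2 ∨ (t' : ℕ) = 2*(t : ℕ)+3) then some 0
         else none)
      else none
  | _, _ => none

/-- The tree `T_SAT`. -/
def TSatG (n m : ℕ) (lit : Fin m → Fin 3 → Fin n × Bool) : SimpleGraph (TSatV n m) :=
  SimpleGraph.fromRel fun u v => (TSg0 n m lit u v).isSome

/-- The edge coloring of `T_SAT`. -/
def TSatc (n m : ℕ) (lit : Fin m → Fin 3 → Fin n × Bool) : Sym2 (TSatV n m) → ℕ :=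
  Sym2.lift ⟨fun u v => max ((TSg0 n m lit u v).getD 0) ((TSg0 n m lit v u).getD 0),
    fun _ _ => max_comm _ _⟩

/-- The 3-SAT instance `lit` is satisfiable. -/
def SatInstance (n m : ℕ) (lit : Fin m → Fin 3 → Fin n × Bool) : Prop :=
  ∃ a : Fin n → Bool, ∀ d : Fin m, ∃ j : Fin 3, a (lit d j).1 = (lit d j).2


section General

variable {V : Type} {k : ℕ}

lemma clean_succ_mem {S : Strategy V k} {G : SimpleGraph V} {t : ℕ} {e : Sym2 V} :
    e ∈ S.clean G (t+1) ↔
      (e ∈ (S.clean G t ∪ {e' | e' ∈ G.edgeSet ∧ S.sweeps t e'}) ∧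
        ¬ exposedEdge G (S.occupied (t+1))
          (S.clean G t ∪ {e' | e' ∈ G.edgeSet ∧ S.sweeps t e'}) e) := Iff.rfl

lemma clean_zero {S : Strategy V k} {G : SimpleGraph V} : S.clean G 0 = ∅ := rfl

/-- If a clean edge contains `z` while some `z`-edge is dirty, `z` is occupied. -/
lemma occ_of_clean_dirty {S : Strategy V k} {G : SimpleGraph V} {t : ℕ} {z x y : V}
    (hx : s(z,x) ∈ S.clean G t) (hy : s(z,y) ∉ S.clean G t)
    (hyE : s(z,y) ∈ G.edgeSet) : z ∈ S.occupied t := by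
  cases t with
  | zero => exact absurd hx (by simp [clean_zero])
  | succ t =>
    by_contra hz
    rw [clean_succ_mem] at hx hy
    set C := S.clean G t ∪ {e' | e' ∈ G.edgeSet ∧ S.sweeps t e'} with hC
    rcases Classical.em (s(z,y) ∈ C) with hmem | hmem
    · have hexp : exposedEdge G (S.occupied (t+1)) C s(z,y) := by tauto
      obtain ⟨u', w', hu', hf, p, hp⟩ := hexp
      rcases Sym2.mem_iff.mp hu' with rfl | rfl
      · exact hx.2 ⟨u', w', Sym2.mem_mk_left _ _, hf, p, hp⟩
      · have hadj : G.Adj z u' := hyE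
        refine hx.2 ⟨z, w', Sym2.mem_mk_left _ _, hf, SimpleGraph.Walk.cons hadj p, ?_⟩
        intro v hv
        rw [SimpleGraph.Walk.support_cons, List.mem_cons] at hv
        rcases hv with rfl | hv
        · exact hz
        · exact hp v hv
    · refine hx.2 ⟨z, z, Sym2.mem_mk_left _ _, ⟨s(z,y), hyE, hmem, Sym2.mem_mk_left _ _⟩,
        SimpleGraph.Walk.nil, ?_⟩
      intro v hv
      rw [SimpleGraph.Walk.support_nil, List.mem_singleton] at hv
      subst hv; exact hz

/-- Only searchers of color `i` can ever occupy a vertex all of whose edges are color `i`. -/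
lemma only_color_at {S : Strategy V k} {G : SimpleGraph V} {c : Sym2 V → ℕ}
    (hv : S.Valid G c) {i : ℕ} {z : V} (Hz : ∀ w, G.Adj z w → c s(z,w) = i) :
    ∀ t ≤ S.len, ∀ s, S.pos t s = some z → S.colS s = i := by
  intro t
  induction t with
  | zero => intro _ s h; simp [Strategy.pos] at h
  | succ t ih =>
    intro hle s h
    have hlt : t < S.len := hle
    rcases hm : S.moves t with ⟨s', v⟩ | ⟨s'⟩ | ⟨s', u, v⟩
    · simp only [Strategy.pos, hm] at h
      split at h
      · rename_i hss
        cases h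
        obtain ⟨_, w, hw, hcol⟩ := hv.place_ok t hlt s' z hm
        rw [hss, ← hcol, Hz w hw]
      · exact ih (le_of_lt hlt) s h
    · simp only [Strategy.pos, hm] at h
      split at h
      · cases h
      · exact ih (le_of_lt hlt) s h
    · simp only [Strategy.pos, hm] at h
      split at h
      · rename_i hss
        cases h
        obtain ⟨hadj, hcol, _⟩ := hv.slide_ok t hlt s' u z hm
        rw [hss, ← hcol, Sym2.eq_swap, Hz u hadj.symm]
      · exact ih (le_of_lt hlt) s h

lemma ncolor_unique {S : Strategy V k} {i : ℕ} (h : S.ncolor i ≤ 1) :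
    ∀ s s', S.colS s = i → S.colS s' = i → s = s' := by
  intro s s' hs hs'
  have hm : s ∈ Finset.univ.filter (fun x : Fin k => S.colS x = i) := by
    simp [Finset.mem_filter, hs]
  have hm' : s' ∈ Finset.univ.filter (fun x : Fin k => S.colS x = i) := by
    simp [Finset.mem_filter, hs']
  exact Finset.card_le_one.mp h s hm s' hm'

end General
section General2

variable {V : Type} {k : ℕ}

lemma sweeps_unique {S : Strategy V k} {t : ℕ} {e f : Sym2 V}
    (he : S.sweeps t e) (hf : S.sweeps t f) : e = f := by
  obtain ⟨s, u, v, hm, rfl⟩ := he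
  obtain ⟨s', u', v', hm', rfl⟩ := hf
  rw [hm] at hm'
  cases hm'
  rfl

/-- One step of the invariant: two `z`-star edges cannot both be clean. -/
lemma star_step {S : Strategy V k} {G : SimpleGraph V} {c : Sym2 V → ℕ}
    (hv : S.Valid G c) {i : ℕ} (hone : ∀ s s' : Fin k, S.colS s = i → S.colS s' = i → s = s')
    {z x y g : V} (hzx : G.Adj z x) (hzy : G.Adj z y) (hzg : G.Adj z g)
    (Hz : ∀ w, G.Adj z w → c s(z,w) = i)
    {t : ℕ} (ht : t + 1 ≤ S.len)
    (hx1 : s(z,x) ∈ S.clean G (t+1)) (hy1 : s(z,y) ∈ S.clean G (t+1))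
    (hxt : s(z,x) ∈ S.clean G t) (hyt : s(z,y) ∉ S.clean G t)
    (hpair : ¬(s(z,x) ∈ S.clean G t ∧ s(z,g) ∈ S.clean G t))
    (hgy : g ≠ y) : False := by
  have hlt : t < S.len := ht
  have hysw : S.sweeps t s(z,y) := by
    rcases (clean_succ_mem.mp hy1).1 with h | h
    · exact absurd h hyt
    · exact h.2
  obtain ⟨s, u, v, hm, he⟩ := hysw
  obtain ⟨hadj, hcol, hposu⟩ := hv.slide_ok t hlt s u v hm
  have hcolS : S.colS s = i := by rw [← hcol, ← he, Hz y hzy]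
  have hg1 : s(z,g) ∉ S.clean G (t+1) := by
    intro hg
    rcases (clean_succ_mem.mp hg).1 with h | h
    · exact hpair ⟨hxt, h⟩
    · have : s(z,g) = s(z,y) := sweeps_unique h.2 ⟨s, u, v, hm, he⟩
      exact hgy (Sym2.congr_right.mp this)
  rcases Sym2.eq_iff.mp he with ⟨rfl, rfl⟩ | ⟨rfl, rfl⟩
  · -- slide from z to y
    have hznocc : z ∉ S.occupied (t+1) := by
      rintro ⟨s'', hs''⟩
      simp only [Strategy.pos, hm] at hs''
      split at hs''
      · rename_i hss
        cases hs''
        exact hzy.ne rfl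
      · have : S.colS s'' = i := only_color_at hv Hz t (le_of_lt hlt) s'' hs''
        rename_i hss
        exact hss (hone s'' s this hcolS)
    exact hznocc (occ_of_clean_dirty hx1 hg1 (SimpleGraph.mem_edgeSet _ |>.mpr hzg))
  · -- slide from y to z
    have hzocc : z ∈ S.occupied t :=
      occ_of_clean_dirty hxt hyt (SimpleGraph.mem_edgeSet _ |>.mpr hzy)
    obtain ⟨s'', hs''⟩ := hzocc
    have : S.colS s'' = i := only_color_at hv Hz t (le_of_lt hlt) s'' hs''
    have hss : s'' = s := hone s'' s this hcolS
    rw [hss, hposu] at hs''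
    cases hs''
    exact hzy.ne rfl

/-- The star lemma: a vertex with three incident edges, all of whose incident
edges have color `i`, forces at least two searchers of color `i`. -/
lemma star_lemma {S : Strategy V k} {G : SimpleGraph V} {c : Sym2 V → ℕ}
    (hv : S.Valid G c) (hc : S.CleansAll G) {i : ℕ} {z a b d : V}
    (hab : a ≠ b) (had : a ≠ d) (hbd : b ≠ d)
    (hza : G.Adj z a) (hzb : G.Adj z b) (hzd : G.Adj z d)
    (Hz : ∀ w, G.Adj z w → c s(z,w) = i) :
    2 ≤ S.ncolor i := by
  by_contra hlt
  have hone := ncolor_unique (by omega : S.ncolor i ≤ 1)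
  have key : ∀ t ≤ S.len,
      ¬((s(z,a) ∈ S.clean G t ∧ s(z,b) ∈ S.clean G t) ∨
        (s(z,a) ∈ S.clean G t ∧ s(z,d) ∈ S.clean G t) ∨
        (s(z,b) ∈ S.clean G t ∧ s(z,d) ∈ S.clean G t)) := by
    intro t
    induction t with
    | zero => intro _ h; simp [clean_zero] at h
    | succ t ih =>
      intro hle hP
      have hle' : t ≤ S.len := le_of_lt hle
      have ihn := ih hle'
      have hstep : ∀ x y g : V, G.Adj z x → G.Adj z y → G.Adj z g → x ≠ y → g ≠ y → g ≠ x →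
          s(z,x) ∈ S.clean G (t+1) → s(z,y) ∈ S.clean G (t+1) →
          ¬(s(z,x) ∈ S.clean G t ∧ s(z,y) ∈ S.clean G t) →
          ¬(s(z,x) ∈ S.clean G t ∧ s(z,g) ∈ S.clean G t) →
          ¬(s(z,y) ∈ S.clean G t ∧ s(z,g) ∈ S.clean G t) → False := by
        intro x y g hzx hzy hzg hxy hgy hgx hx1 hy1 hpxy hpxg hpyg
        by_cases hxt : s(z,x) ∈ S.clean G t
        · have hyt : s(z,y) ∉ S.clean G t := fun h => hpxy ⟨hxt, h⟩
          exact star_step hv hone hzx hzy hzg Hz hle hx1 hy1 hxt hyt hpxg hgy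
        · by_cases hyt : s(z,y) ∈ S.clean G t
          · exact star_step hv hone hzy hzx hzg Hz hle hy1 hx1 hyt hxt
              (fun h => hpyg h) hgx
          · -- both swept: impossible since distinct
            have hx' : S.sweeps t s(z,x) := by
              rcases (clean_succ_mem.mp hx1).1 with h | h
              · exact absurd h hxt
              · exact h.2
            have hy' : S.sweeps t s(z,y) := by
              rcases (clean_succ_mem.mp hy1).1 with h | h
              · exact absurd h hyt
              · exact h.2
            exact hxy (Sym2.congr_right.mp (sweeps_unique hx' hy'))
      rcases hP with ⟨h1, h2⟩ | ⟨h1, h2⟩ | ⟨h1, h2⟩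
      · exact hstep a b d hza hzb hzd hab hbd.symm had.symm h1 h2
          (fun h => ihn (Or.inl h)) (fun h => ihn (Or.inr (Or.inl h)))
          (fun h => ihn (Or.inr (Or.inr h)))
      · exact hstep a d b hza hzd hzb had hbd hab.symm h1 h2
          (fun h => ihn (Or.inr (Or.inl h))) (fun h => ihn (Or.inl h))
          (fun ⟨u1, u2⟩ => ihn (Or.inr (Or.inr ⟨u2, u1⟩)))
      · exact hstep b d a hzb hzd hza hbd had hab h1 h2
          (fun h => ihn (Or.inr (Or.inr h))) (fun ⟨u1, u2⟩ => ihn (Or.inl ⟨u2, u1⟩))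
          (fun ⟨u1, u2⟩ => ihn (Or.inr (Or.inl ⟨u2, u1⟩)))
  refine key S.len le_rfl (Or.inl ⟨?_, ?_⟩)
  · rw [hc]; exact (SimpleGraph.mem_edgeSet _).mpr hza
  · rw [hc]; exact (SimpleGraph.mem_edgeSet _).mpr hzb

/-- Any color appearing on an edge needs at least one searcher. -/
lemma one_searcher {S : Strategy V k} {G : SimpleGraph V} {c : Sym2 V → ℕ}
    (hv : S.Valid G c) (hc : S.CleansAll G) {e : Sym2 V} (he : e ∈ G.edgeSet) :
    1 ≤ S.ncolor (c e) := by
  have hlen : e ∈ S.clean G S.len := by rw [hc]; exact he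
  have hne : {t | e ∈ S.clean G t}.Nonempty := ⟨S.len, hlen⟩
  set t0 := sInf {t | e ∈ S.clean G t} with ht0
  have hmem : e ∈ S.clean G t0 := Nat.sInf_mem hne
  have hle : t0 ≤ S.len := Nat.sInf_le hlen
  cases h0 : t0 with
  | zero => rw [h0] at hmem; simp [clean_zero] at hmem
  | succ t =>
    have hnt : e ∉ S.clean G t := fun h => by
      have := Nat.sInf_le (s := {t | e ∈ S.clean G t}) h
      omega
    rw [h0] at hmem
    have hsw : S.sweeps t e := by
      rcases (clean_succ_mem.mp hmem).1 with h | h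
      · exact absurd h hnt
      · exact h.2
    obtain ⟨s, u, v, hm, rfl⟩ := hsw
    have hlt : t < S.len := by omega
    obtain ⟨_, hcol, _⟩ := hv.slide_ok t hlt s u v hm
    exact Finset.card_pos.mpr ⟨s, by simp [Finset.mem_filter, hcol]⟩
end General2
section TSat

variable (n m : ℕ) (lit : Fin m → Fin 3 → Fin n × Bool)

lemma tsatc_eq (u v : TSatV n m) :
    TSatc n m lit s(u, v) = max ((TSg0 n m lit u v).getD 0) ((TSg0 n m lit v u).getD 0) := rfl

lemma tsg0_pathv_fst (u : Fin (4*n+3*m+5)) (w : TSatV n m) :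
    (TSg0 n m lit (TSatV.pathv u) w).getD 0 = 0 := by
  cases w <;> first | rfl | (simp only [TSg0]; split <;> rfl)

lemma tsg0_pathv_snd (u : Fin (4*n+3*m+5)) (w : TSatV n m) :
    (TSg0 n m lit w (TSatV.pathv u)).getD 0 = 0 := by
  cases w <;> first | rfl | (simp only [TSg0]; split <;> rfl)

lemma hzR (u : Fin (4*n+3*m+5)) (w : TSatV n m) :
    TSatc n m lit s(TSatV.pathv u, w) = 0 := by
  rw [tsatc_eq, tsg0_pathv_fst, tsg0_pathv_snd]; rfl

end TSat
section TSat2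

variable (n m : ℕ) (lit : Fin m → Fin 3 → Fin n × Bool)

lemma hzC (d : Fin m) (w : TSatV n m)
    (hw : (TSatG n m lit).Adj (TSatV.lsub' d false ⟨0, by omega⟩ ⟨1, by omega⟩) w) :
    TSatc n m lit s(TSatV.lsub' d false ⟨0, by omega⟩ ⟨1, by omega⟩, w) = 1 + 3*n + (d : ℕ) := by
  rw [TSatG, SimpleGraph.fromRel_adj] at hw
  obtain ⟨hne, hw⟩ := hw
  rw [tsatc_eq]
  cases w with
  | lsub' d' side' cp' t' =>
    simp only [TSg0] at hw ⊢
    by_cases hcond : d = d' ∧ false = side' ∧ (⟨0, by omega⟩ : Fin 5) = cp'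
    · obtain ⟨rfl, h2, h3⟩ := hcond
      subst h2; subst h3
      simp only [eq_self_iff_true, true_and, and_true, if_true] at hw ⊢
      split_ifs at hw ⊢ <;> simp_all <;> omega
    · have hcond2 : ¬(d' = d ∧ side' = false ∧ cp' = (⟨0, by omega⟩ : Fin 5)) :=
        fun ⟨a, b, c⟩ => hcond ⟨a.symm, b.symm, c.symm⟩
      rw [if_neg hcond, if_neg hcond2] at hw
      simp at hw
  | pathv i => simp [TSg0] at hw
  | pend1 b => simp [TSg0] at hw
  | pendl b => simp [TSg0] at hw
  | pendb => simp [TSg0] at hw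
  | hsub i j => simp [TSg0] at hw
  | lsub x cp t => simp [TSg0] at hw
  | ssub p s t => simp [TSg0] at hw
  | clsub d' j t => simp [TSg0] at hw

end TSat2
section TSat3

variable (n m : ℕ) (lit : Fin m → Fin 3 → Fin n × Bool)

lemma adjR1 : (TSatG n m lit).Adj (TSatV.pathv ⟨0, by omega⟩) (TSatV.pend1 true) := by
  rw [TSatG, SimpleGraph.fromRel_adj]
  exact ⟨by simp, Or.inl rfl⟩

lemma adjR2 : (TSatG n m lit).Adj (TSatV.pathv ⟨0, by omega⟩) (TSatV.pend1 false) := by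
  rw [TSatG, SimpleGraph.fromRel_adj]
  exact ⟨by simp, Or.inl rfl⟩

lemma adjR3 : (TSatG n m lit).Adj (TSatV.pathv ⟨0, by omega⟩) (TSatV.pathv ⟨1, by omega⟩) := by
  rw [TSatG, SimpleGraph.fromRel_adj]
  refine ⟨by simp, Or.inl ?_⟩
  simp [TSg0]

lemma adjC' (d : Fin m) (j : Fin 11) (hj : 2 ≤ (j : ℕ) ∧ (j : ℕ) ≤ 4) :
    (TSatG n m lit).Adj (TSatV.lsub' d false ⟨0, by omega⟩ ⟨1, by omega⟩)
      (TSatV.lsub' d false ⟨0, by omega⟩ j) := by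
  rw [TSatG, SimpleGraph.fromRel_adj]
  refine ⟨by simp; omega, Or.inl ?_⟩
  simp [TSg0]
  omega

lemma adj_ssub (p : Fin n) (sign : Bool) (t t' : Fin 7) (q : ℕ)
    (h : TSg0 n m lit (TSatV.ssub p sign t) (TSatV.ssub p sign t') = some q)
    (hne : t ≠ t') :
    (TSatG n m lit).Adj (TSatV.ssub p sign t) (TSatV.ssub p sign t') ∧
      TSatc n m lit s(TSatV.ssub p sign t, TSatV.ssub p sign t') = max q
        ((TSg0 n m lit (TSatV.ssub p sign t') (TSatV.ssub p sign t)).getD 0) := by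
  constructor
  · rw [TSatG, SimpleGraph.fromRel_adj]
    exact ⟨by simp [hne], Or.inl (by rw [h]; rfl)⟩
  · rw [tsatc_eq, h]; rfl

lemma colorT (p : Fin n) :
    TSatc n m lit s(TSatV.ssub p true ⟨0, by omega⟩, TSatV.ssub p true ⟨1, by omega⟩)
      = 1 + n + (p : ℕ) ∧
    (TSatG n m lit).Adj (TSatV.ssub p true ⟨0, by omega⟩) (TSatV.ssub p true ⟨1, by omega⟩) := by
  have h : TSg0 n m lit (TSatV.ssub p true ⟨0, by omega⟩) (TSatV.ssub p true ⟨1, by omega⟩)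
      = some (1 + n + (p : ℕ)) := by simp [TSg0]
  obtain ⟨h1, h2⟩ := adj_ssub n m lit p true _ _ _ h (by simp)
  refine ⟨?_, h1⟩
  rw [h2]
  have : TSg0 n m lit (TSatV.ssub p true ⟨1, by omega⟩) (TSatV.ssub p true ⟨0, by omega⟩)
      = none := by simp [TSg0]
  rw [this]; simp

lemma colorF (p : Fin n) :
    TSatc n m lit s(TSatV.ssub p false ⟨0, by omega⟩, TSatV.ssub p false ⟨1, by omega⟩)
      = 1 + 2*n + (p : ℕ) ∧
    (TSatG n m lit).Adj (TSatV.ssub p false ⟨0, by omega⟩) (TSatV.ssub p false ⟨1, by omega⟩) := by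
  have h : TSg0 n m lit (TSatV.ssub p false ⟨0, by omega⟩) (TSatV.ssub p false ⟨1, by omega⟩)
      = some (1 + 2*n + (p : ℕ)) := by simp [TSg0]
  obtain ⟨h1, h2⟩ := adj_ssub n m lit p false _ _ _ h (by simp)
  refine ⟨?_, h1⟩
  rw [h2]
  have : TSg0 n m lit (TSatV.ssub p false ⟨1, by omega⟩) (TSatV.ssub p false ⟨0, by omega⟩)
      = none := by simp [TSg0]
  rw [this]; simp

lemma colorX (p : Fin n) :
    TSatc n m lit s(TSatV.ssub p true ⟨2, by omega⟩, TSatV.ssub p true ⟨3, by omega⟩)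
      = 1 + (p : ℕ) ∧
    (TSatG n m lit).Adj (TSatV.ssub p true ⟨2, by omega⟩) (TSatV.ssub p true ⟨3, by omega⟩) := by
  have h : TSg0 n m lit (TSatV.ssub p true ⟨2, by omega⟩) (TSatV.ssub p true ⟨3, by omega⟩)
      = some (1 + (p : ℕ)) := by simp [TSg0]
  obtain ⟨h1, h2⟩ := adj_ssub n m lit p true _ _ _ h (by simp)
  refine ⟨?_, h1⟩
  rw [h2]
  have : TSg0 n m lit (TSatV.ssub p true ⟨3, by omega⟩) (TSatV.ssub p true ⟨2, by omega⟩)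
      = none := by simp [TSg0]
  rw [this]; simp

end TSat3

/-- Any heterogeneous search strategy cleaning `T_SAT` with exactly
`3n + 2m + 2` searchers must use: one searcher of each color `X_p` (= `1+p`),
`T_p` (= `1+n+p`), `F_p` (= `1+2n+p`) for every variable `p`, two searchers of each
clause color `C_d` (= `1+3n+d`), and two searchers of the background color `R` (= 0). -/
theorem tsat_forced_color_assignment (n m : ℕ) (lit : Fin m → Fin 3 → Fin n × Bool)
    (S : Strategy (TSatV n m) (3*n + 2*m + 2))
    (hv : S.Valid (TSatG n m lit) (TSatc n m lit))
    (hc : S.CleansAll (TSatG n m lit)) :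
    S.ncolor 0 = 2 ∧
    (∀ p < n, S.ncolor (1 + p) = 1 ∧ S.ncolor (1 + n + p) = 1 ∧
      S.ncolor (1 + 2*n + p) = 1) ∧
    (∀ d < m, S.ncolor (1 + 3*n + d) = 2) := by
  classical
  have hR : 2 ≤ S.ncolor 0 := by
    refine star_lemma hv hc (z := TSatV.pathv ⟨0, by omega⟩) (a := TSatV.pend1 true)
      (b := TSatV.pend1 false) (d := TSatV.pathv ⟨1, by omega⟩) (by simp) (by simp) (by simp)
      (adjR1 n m lit) (adjR2 n m lit) (adjR3 n m lit) (fun w _ => hzR n m lit _ w)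
  have hC : ∀ d : Fin m, 2 ≤ S.ncolor (1 + 3*n + (d : ℕ)) := by
    intro d
    refine star_lemma hv hc (z := TSatV.lsub' d false ⟨0, by omega⟩ ⟨1, by omega⟩)
      (a := TSatV.lsub' d false ⟨0, by omega⟩ ⟨2, by omega⟩)
      (b := TSatV.lsub' d false ⟨0, by omega⟩ ⟨3, by omega⟩)
      (d := TSatV.lsub' d false ⟨0, by omega⟩ ⟨4, by omega⟩)
      (by simp) (by simp) (by simp)
      (adjC' n m lit d ⟨2, by omega⟩ (by constructor <;> norm_num))
      (adjC' n m lit d ⟨3, by omega⟩ (by constructor <;> norm_num))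
      (adjC' n m lit d ⟨4, by omega⟩ (by constructor <;> norm_num))
      (fun w hw => hzC n m lit d w hw)
  have hX : ∀ p : Fin n, 1 ≤ S.ncolor (1 + (p : ℕ)) := by
    intro p
    obtain ⟨hc1, ha⟩ := colorX n m lit p
    have := one_searcher hv hc ((SimpleGraph.mem_edgeSet _).mpr ha)
    rwa [hc1] at this
  have hT : ∀ p : Fin n, 1 ≤ S.ncolor (1 + n + (p : ℕ)) := by
    intro p
    obtain ⟨hc1, ha⟩ := colorT n m lit p
    have := one_searcher hv hc ((SimpleGraph.mem_edgeSet _).mpr ha)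
    rwa [hc1] at this
  have hF : ∀ p : Fin n, 1 ≤ S.ncolor (1 + 2*n + (p : ℕ)) := by
    intro p
    obtain ⟨hc1, ha⟩ := colorF n m lit p
    have := one_searcher hv hc ((SimpleGraph.mem_edgeSet _).mpr ha)
    rwa [hc1] at this
  -- counting
  set K := 3*n + m + 1 with hK
  set b : ℕ → ℕ := fun i => 1 + (if i = 0 ∨ 3*n < i then 1 else 0) with hb
  have hble : ∀ i ∈ Finset.range K, b i ≤ S.ncolor i := by
    intro i hi
    rw [Finset.mem_range] at hi
    by_cases h0 : i = 0
    · subst h0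
      simpa [hb] using hR
    · by_cases h3 : 3*n < i
      · have hd : i - 3*n - 1 < m := by omega
        have h2 := hC ⟨i - 3*n - 1, hd⟩
        rw [show ((⟨i - 3*n - 1, hd⟩ : Fin m) : ℕ) = i - 3*n - 1 from rfl,
          show 1 + 3*n + (i - 3*n - 1) = i by omega] at h2
        simpa [hb, h0, h3] using h2
      · have hgoal : 1 ≤ S.ncolor i := by
          rcases (by omega : i ≤ n ∨ (n < i ∧ i ≤ 2*n) ∨ 2*n < i) with h | h | h
          · have hp : i - 1 < n := by omega
            have h2 := hX ⟨i - 1, hp⟩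
            rwa [show ((⟨i - 1, hp⟩ : Fin n) : ℕ) = i - 1 from rfl,
              show 1 + (i - 1) = i by omega] at h2
          · have hp : i - n - 1 < n := by omega
            have h2 := hT ⟨i - n - 1, hp⟩
            rwa [show ((⟨i - n - 1, hp⟩ : Fin n) : ℕ) = i - n - 1 from rfl,
              show 1 + n + (i - n - 1) = i by omega] at h2
          · have hp : i - 2*n - 1 < n := by omega
            have h2 := hF ⟨i - 2*n - 1, hp⟩
            rwa [show ((⟨i - 2*n - 1, hp⟩ : Fin n) : ℕ) = i - 2*n - 1 from rfl,
              show 1 + 2*n + (i - 2*n - 1) = i by omega] at h2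
        simpa [hb, h0, h3] using hgoal
  have hsum_b : ∑ i ∈ Finset.range K, b i = 3*n + 2*m + 2 := by
    have h1 : ∑ i ∈ Finset.range K, b i
        = ∑ i ∈ Finset.range K, 1 + ∑ i ∈ Finset.range K, (if i = 0 ∨ 3*n < i then 1 else 0) := by
      rw [← Finset.sum_add_distrib]
    have h2 : ∑ i ∈ Finset.range K, (if i = 0 ∨ 3*n < i then 1 else 0)
        = ((Finset.range K).filter (fun i => i = 0 ∨ 3*n < i)).card :=
      (Finset.card_filter _ _).symm
    have h3 : (Finset.range K).filter (fun i => i = 0 ∨ 3*n < i)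
        = insert 0 (Finset.Ico (3*n+1) K) := by
      ext i
      simp only [Finset.mem_filter, Finset.mem_range, Finset.mem_insert, Finset.mem_Ico]
      omega
    have h4 : (0 : ℕ) ∉ Finset.Ico (3*n+1) K := by simp
    rw [h1, h2, h3, Finset.card_insert_of_notMem h4, Nat.card_Ico]
    simp [hK]
    omega
  have hsum_le : ∑ i ∈ Finset.range K, S.ncolor i ≤ 3*n + 2*m + 2 := by
    set s := Finset.univ.filter (fun x : Fin (3*n+2*m+2) => S.colS x ∈ Finset.range K) with hs
    have hfib := Finset.card_eq_sum_card_fiberwise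
      (f := S.colS) (s := s) (t := Finset.range K)
      (fun x hx => (Finset.mem_filter.mp hx).2)
    have hcol : ∀ i ∈ Finset.range K,
        (s.filter (fun x => S.colS x = i)).card = S.ncolor i := by
      intro i hi
      congr 1
      ext x
      simp only [hs, Finset.mem_filter, Finset.mem_univ, true_and, and_iff_right_iff_imp]
      intro h; rw [h]; exact hi
    rw [Finset.sum_congr rfl hcol] at hfib
    rw [← hfib]
    calc s.card ≤ Finset.univ.card := Finset.card_le_univ s
    _ = 3*n + 2*m + 2 := by simp
  have hsum_ge : 3*n + 2*m + 2 ≤ ∑ i ∈ Finset.range K, S.ncolor i := by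
    have h := Finset.sum_le_sum hble
    omega
  have heq : ∑ i ∈ Finset.range K, b i = ∑ i ∈ Finset.range K, S.ncolor i := by omega
  have hall : ∀ i ∈ Finset.range K, b i = S.ncolor i :=
    (Finset.sum_eq_sum_iff_of_le hble).mp heq
  refine ⟨?_, ?_, ?_⟩
  · have := hall 0 (by simp [hK])
    simp [hb] at this
    omega
  · intro p hp
    have e1 := hall (1 + p) (by simp [hK]; omega)
    have e2 := hall (1 + n + p) (by simp [hK]; omega)
    have e3 := hall (1 + 2*n + p) (by simp [hK]; omega)
    simp only [hb] at e1 e2 e3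
    rw [if_neg (by omega)] at e1
    rw [if_neg (by omega)] at e2
    rw [if_neg (by omega)] at e3
    omega
  · intro d hd
    have e := hall (1 + 3*n + d) (by simp [hK]; omega)
    simp only [hb] at e
    rw [if_pos (by omega)] at e
    omega

end GS
end

section
/- For any graph G with a subgraph G', every successful attempt on G (a maximal interval of moves during which G is partially clean and which ends with G fully clean) contains a successful attempt on G'. -/
namespace GS

variable {V : Type} {k : ℕ}

/-- `G'` (given by its edge set `E'`) is partially clean after move `t`. -/
def PartClean {V : Type} {k : ℕ} (S : Strategy V k) (G : SimpleGraph V)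
    (E' : Set (Sym2 V)) (t : ℕ) : Prop :=
  (S.clean G t ∩ E').Nonempty ∧ S.clean G t ∩ E' ≠ E'

/-- A successful attempt on the subgraph with edge set `E'`: a maximal interval
`[t, t']` of moves during which `E'` is partially clean, ending with `E'` fully
clean at `t'` (and not before). -/
def SAttempt {V : Type} {k : ℕ} (S : Strategy V k) (G : SimpleGraph V)
    (E' : Set (Sym2 V)) (t t' : ℕ) : Prop :=
  t ≤ t' ∧ t' ≤ S.len ∧
  (∀ j, t ≤ j → j < t' → PartClean S G E' j) ∧
  S.clean G t' ∩ E' = E' ∧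
  (∀ j, t ≤ j → j < t' → S.clean G j ∩ E' ≠ E') ∧
  (t = 0 ∨ ¬ PartClean S G E' (t - 1))

/-- Every successful attempt on `G` contains a successful attempt
on any (nonempty) subgraph `G'` of `G`. -/
theorem successful_attempt_mono {V : Type} {k : ℕ} (S : Strategy V k)
    (G : SimpleGraph V) (E' : Set (Sym2 V)) (hE : E' ⊆ G.edgeSet)
    (hne : E'.Nonempty) (t t' : ℕ) (h : SAttempt S G G.edgeSet t t') :
    ∃ s s', t ≤ s ∧ s ≤ s' ∧ s' ≤ t' ∧ SAttempt S G E' s s' := by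
  obtain ⟨htt', hlen, hpart, hfull, hnotfull, hstart⟩ := h
  have hE'full : S.clean G t' ∩ E' = E' := by
    apply Set.eq_of_subset_of_subset Set.inter_subset_right
    intro e he
    have : e ∈ S.clean G t' ∩ G.edgeSet := hfull.symm ▸ hE he
    exact ⟨this.1, he⟩
  set A : Set ℕ := {j | t ≤ j ∧ S.clean G j ∩ E' = E'} with hA
  have hAne : A.Nonempty := ⟨t', htt', hE'full⟩
  set s' := sInf A with hs'def
  have hs'mem : s' ∈ A := Nat.sInf_mem hAne
  have hts' : t ≤ s' := hs'mem.1
  have hs'full : S.clean G s' ∩ E' = E' := hs'mem.2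
  have hs'le : s' ≤ t' := Nat.sInf_le ⟨htt', hE'full⟩
  have hnotbefore : ∀ j, t ≤ j → j < s' → S.clean G j ∩ E' ≠ E' := by
    intro j hj hjs' hfl
    exact absurd (Nat.sInf_le (show j ∈ A from ⟨hj, hfl⟩)) (not_le.mpr hjs')
  have hpre : t = 0 ∨ ¬ PartClean S G E' (t - 1) := by
    rcases hstart with h0 | hnp
    · exact Or.inl h0
    · refine Or.inr fun hPC => hnp ?_
      obtain ⟨⟨e, he1, he2⟩, hne2⟩ := hPC
      constructor
      · exact ⟨e, he1, hE he2⟩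
      · intro hfl
        apply hne2
        apply Set.eq_of_subset_of_subset Set.inter_subset_right
        intro f hf
        have : f ∈ S.clean G (t - 1) ∩ G.edgeSet := hfl.symm ▸ hE hf
        exact ⟨this.1, hf⟩
  set B : Set ℕ := {m | ∀ j, m ≤ j → j < s' → PartClean S G E' j} with hB
  have hBne : B.Nonempty := ⟨s', fun j hj hj' => absurd hj (not_le.mpr hj')⟩
  set s := sInf B with hsdef
  have hsmem : s ∈ B := Nat.sInf_mem hBne
  have hss' : s ≤ s' :=
    Nat.sInf_le (show s' ∈ B from fun j hj hj' => absurd hj (not_le.mpr hj'))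
  have hts : t ≤ s := by
    by_contra hlt
    push_neg at hlt
    have ht0 : t ≠ 0 := by omega
    rcases hpre with h0 | hnp
    · exact ht0 h0
    · exact hnp (hsmem (t - 1) (by omega) (by omega))
  refine ⟨s, s', hts, hss', hs'le, hss', hs'le.trans hlen, hsmem, hs'full,
    fun j hj hj' => hnotbefore j (hts.trans hj) hj', ?_⟩
  rcases Nat.eq_zero_or_pos s with h0 | hpos
  · exact Or.inl h0
  · refine Or.inr fun hPC => ?_
    have hnotB : s - 1 ∉ B := fun hmem => absurd (Nat.sInf_le hmem) (by omega)
    apply hnotB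
    intro j hj hj'
    rcases Nat.lt_or_ge j s with hjs | hjs
    · have : j = s - 1 := by omega
      exact this ▸ hPC
    · exact hsmem j hjs hj'

end GS
end
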